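/- arXiv:0807.1282 — 8 statements merged into one kernel-verified Lean document; each statement's English description precedes it below -/
import Mathlib

section
/- Any maximal ℓ-disjoint family of k-element subsets of {1,...,n} (where ℓ ≤ k ≤ n) has at least ⌈C(n,ℓ)/C(k,ℓ)²⌉ members. Here a family is ℓ-disjoint if no two distinct members share ℓ or more elements, and maximal means no k-subset can be added while preserving ℓ-disjointness. -/
/-!
If `H` is maximal, every `k`-subset of `[n]` meets some member of `H` in at least `ℓ` points, so
the at most `|H| C(k,ℓ)` many `ℓ`-subsets of members of `H` cover all `k`-subsets of `[n]`. An
`ℓ`-set lies in only `C(n-ℓ,k-ℓ)` of them, hence `C(n,k) ≤ |H| C(k,ℓ) C(n-ℓ,k-ℓ)`, and the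
identity `C(n,k) C(k,ℓ) = C(n,ℓ) C(n-ℓ,k-ℓ)` turns this into `C(n,ℓ) ≤ |H| C(k,ℓ)²`.
-/

open Finset

namespace Finset

variable {α : Type*} [DecidableEq α]

theorem choose_le_card_mul_choose_of_forall_exists_subset {s : Finset α} {𝒳 : Finset (Finset α)}
    {k ℓ : ℕ} (hℓk : ℓ ≤ k) (hks : k ≤ #s) (h𝒳 : ∀ M ∈ 𝒳, M ⊆ s ∧ #M = ℓ)
    (hcover : ∀ S ∈ s.powersetCard k, ∃ M ∈ 𝒳, M ⊆ S) :
    (#s).choose ℓ ≤ #𝒳 * k.choose ℓ := by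
  have hcount : (#s).choose k ≤ #𝒳 * (#s - ℓ).choose (k - ℓ) :=
    calc (#s).choose k = #(s.powersetCard k) := (card_powersetCard k s).symm
      _ ≤ #(𝒳.biUnion fun M ↦ {S ∈ s.powersetCard k | M ⊆ S}) := card_le_card fun S hS ↦ by
          obtain ⟨M, hM, hMS⟩ := hcover S hS
          exact mem_biUnion.2 ⟨M, hM, mem_filter.2 ⟨hS, hMS⟩⟩
      _ ≤ #𝒳 * (#s - ℓ).choose (k - ℓ) := card_biUnion_le_card_mul _ _ _ fun M hM ↦ by
          obtain ⟨hMs, rfl⟩ := h𝒳 M hM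
          rw [card_filter_powersetCard_subset M s k hMs hℓk]
  refine Nat.le_of_mul_le_mul_right ?_ (Nat.choose_pos (by omega : k - ℓ ≤ #s - ℓ))
  calc (#s).choose ℓ * (#s - ℓ).choose (k - ℓ) = (#s).choose k * k.choose ℓ :=
        (Nat.choose_mul hℓk).symm
    _ ≤ #𝒳 * (#s - ℓ).choose (k - ℓ) * k.choose ℓ := Nat.mul_le_mul_right _ hcount
    _ = #𝒳 * k.choose ℓ * (#s - ℓ).choose (k - ℓ) := by ring

theorem card_biUnion_powersetCard_le {H : Finset (Finset α)} {k : ℕ} (hH : ∀ A ∈ H, #A = k)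
    (ℓ : ℕ) : #(H.biUnion (powersetCard ℓ)) ≤ #H * k.choose ℓ :=
  card_biUnion_le_card_mul _ _ _ fun A hA ↦ by rw [card_powersetCard, hH A hA]

theorem exists_mem_biUnion_powersetCard_subset_of_le_card_inter {H : Finset (Finset α)}
    {S B : Finset α} {ℓ : ℕ} (hB : B ∈ H) (hSB : ℓ ≤ #(S ∩ B)) :
    ∃ M ∈ H.biUnion (powersetCard ℓ), M ⊆ S := by
  obtain ⟨M, hM, hMcard⟩ := exists_subset_card_eq hSB
  exact ⟨M, mem_biUnion.2 ⟨B, hB, mem_powersetCard.2 ⟨hM.trans inter_subset_right, hMcard⟩⟩,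
    hM.trans inter_subset_left⟩

end Finset

theorem choose_le_card_mul_choose_sq_of_maximal (n k ℓ : ℕ) (hℓk : ℓ ≤ k) (hkn : k ≤ n)
    (H : Finset (Finset ℕ)) (hmem : ∀ A ∈ H, A ⊆ range n ∧ #A = k)
    (hmax : ∀ S : Finset ℕ, S ⊆ range n → #S = k → S ∉ H → ∃ B ∈ H, ℓ ≤ #(S ∩ B)) :
    n.choose ℓ ≤ #H * k.choose ℓ ^ 2 := by
  have hcover : ∀ S ∈ (range n).powersetCard k,
      ∃ M ∈ H.biUnion (powersetCard ℓ), M ⊆ S := by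
    intro S hS
    obtain ⟨hSn, hSk⟩ := mem_powersetCard.1 hS
    by_cases hSH : S ∈ H
    · exact exists_mem_biUnion_powersetCard_subset_of_le_card_inter hSH
        (by rwa [inter_self, hSk])
    · obtain ⟨B, hB, hSB⟩ := hmax S hSn hSk hSH
      exact exists_mem_biUnion_powersetCard_subset_of_le_card_inter hB hSB
  have hℓsets : ∀ M ∈ H.biUnion (powersetCard ℓ), M ⊆ range n ∧ #M = ℓ := by
    intro M hM
    obtain ⟨A, hA, hMA⟩ := mem_biUnion.1 hM
    obtain ⟨hMA, hMℓ⟩ := mem_powersetCard.1 hMA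
    exact ⟨hMA.trans (hmem A hA).1, hMℓ⟩
  have hcovering := choose_le_card_mul_choose_of_forall_exists_subset hℓk
    (by rwa [card_range]) hℓsets hcover
  rw [card_range] at hcovering
  calc n.choose ℓ ≤ #(H.biUnion (powersetCard ℓ)) * k.choose ℓ := hcovering
    _ ≤ #H * k.choose ℓ * k.choose ℓ :=
        Nat.mul_le_mul_right _ (card_biUnion_powersetCard_le (fun A hA ↦ (hmem A hA).2) ℓ)
    _ = #H * k.choose ℓ ^ 2 := by ring

theorem stmt0_general (n k ℓ : ℕ) (hlk : ℓ ≤ k) (hkn : k ≤ n)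
    (H : Finset (Finset ℕ))
    (hmem : ∀ A ∈ H, A ⊆ Finset.range n ∧ A.card = k)
    (hmax : ∀ S : Finset ℕ, S ⊆ Finset.range n → S.card = k → S ∉ H →
      ∃ B ∈ H, ℓ ≤ (S ∩ B).card) :
    (⌈(n.choose ℓ : ℚ) / (k.choose ℓ : ℚ) ^ 2⌉ : ℤ) ≤ H.card := by
  have hpos : (0 : ℚ) < (k.choose ℓ : ℚ) ^ 2 := by
    have := Nat.choose_pos hlk
    positivity
  rw [Int.ceil_le, Int.cast_natCast, div_le_iff₀ hpos]
  exact_mod_cast choose_le_card_mul_choose_sq_of_maximal n k ℓ hlk hkn H hmem hmax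

/-- Any maximal ℓ-disjoint family of k-element subsets of {1,...,n} (ℓ ≤ k ≤ n)
has at least ⌈C(n,ℓ)/C(k,ℓ)²⌉ members. -/
theorem stmt0 (n k ℓ : ℕ) (hlk : ℓ ≤ k) (hkn : k ≤ n)
    (H : Finset (Finset ℕ))
    (hmem : ∀ A ∈ H, A ⊆ Finset.range n ∧ A.card = k)
    (hdisj : ∀ A ∈ H, ∀ B ∈ H, A ≠ B → (A ∩ B).card < ℓ)
    (hmax : ∀ S : Finset ℕ, S ⊆ Finset.range n → S.card = k → S ∉ H →
      ∃ B ∈ H, ℓ ≤ (S ∩ B).card) :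
    (⌈(n.choose ℓ : ℚ) / (k.choose ℓ : ℚ) ^ 2⌉ : ℤ) ≤ H.card :=
  stmt0_general n k ℓ hlk hkn H hmem hmax
end

section
/- For ℓ ≤ k ≤ n, there exists an ℓ-disjoint k-uniform hypergraph on n vertices with at least ⌈C(n,ℓ)/C(k,ℓ)²⌉ edges. -/
/-!
Take a maximal ℓ-disjoint family `H` of `k`-subsets of `[n]`. By maximality every `k`-subset
meets some edge of `H` in at least `ℓ` points, hence contains one of the at most
`|H| C(k,ℓ)` `ℓ`-subsets of edges of `H`. Each `ℓ`-set lies in `C(n-ℓ,k-ℓ)` of the `k`-subsets,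
so `C(n,k) ≤ |H| C(k,ℓ) C(n-ℓ,k-ℓ)`, and `C(n,k) C(k,ℓ) = C(n,ℓ) C(n-ℓ,k-ℓ)` turns this into
`C(n,ℓ) ≤ |H| C(k,ℓ)²`.
-/

open Finset

variable {α : Type*} [DecidableEq α]

theorem Finset.exists_maximal_pairwise_card_inter_lt (Ω : Finset (Finset α)) (ℓ : ℕ) :
    ∃ H ⊆ Ω, (H : Set (Finset α)).Pairwise (fun A B => #(A ∩ B) < ℓ) ∧
      ∀ K ∈ Ω, K ∉ H → ∃ A ∈ H, ℓ ≤ #(K ∩ A) := by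
  classical
  obtain ⟨H, hH⟩ := (Ω.powerset.filter fun H : Finset (Finset α) =>
    (H : Set (Finset α)).Pairwise (fun A B => #(A ∩ B) < ℓ)).exists_maximal ⟨∅, by simp⟩
  obtain ⟨hHΩ, hdisj⟩ := by simpa only [mem_filter, mem_powerset] using hH.prop
  refine ⟨H, hHΩ, hdisj, fun K hK hKH => ?_⟩
  by_contra! hsmall
  refine hKH (hH.eq_of_le ?_ (subset_insert K H) ▸ mem_insert_self K H)
  simp only [mem_filter, mem_powerset, coe_insert, Set.pairwise_insert]
  refine ⟨insert_subset hK hHΩ, hdisj, fun A hA _ => ⟨hsmall A hA, ?_⟩⟩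
  rw [inter_comm]
  exact hsmall A hA

theorem Finset.choose_le_card_mul_of_forall_exists_card_inter {s : Finset α}
    {H : Finset (Finset α)} {k ℓ : ℕ} (hH : ∀ A ∈ H, A ⊆ s ∧ #A = k)
    (hcover : ∀ K ∈ s.powersetCard k, ∃ A ∈ H, ℓ ≤ #(K ∩ A)) :
    (#s).choose k ≤ #H * k.choose ℓ * (#s - ℓ).choose (k - ℓ) := by
  set shadow := H.biUnion (powersetCard ℓ)
  have hshadow : #shadow ≤ #H * k.choose ℓ :=
    card_biUnion_le_card_mul _ _ _ fun A hA => by rw [card_powersetCard, (hH A hA).2]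
  have hcovered : s.powersetCard k ⊆ shadow.biUnion fun L => (s.powersetCard k).filter (L ⊆ ·) := by
    intro K hK
    obtain ⟨A, hA, hKA⟩ := hcover K hK
    obtain ⟨L, hL, hLcard⟩ := exists_subset_card_eq hKA
    have hLshadow : L ∈ shadow :=
      mem_biUnion.2 ⟨A, hA, mem_powersetCard.2 ⟨hL.trans inter_subset_right, hLcard⟩⟩
    exact mem_biUnion.2 ⟨L, hLshadow, mem_filter.2 ⟨hK, hL.trans inter_subset_left⟩⟩
  have hfiber : ∀ L ∈ shadow, #((s.powersetCard k).filter (L ⊆ ·)) = (#s - ℓ).choose (k - ℓ) := by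
    intro L hL
    obtain ⟨A, hA, hLA⟩ := mem_biUnion.1 hL
    obtain ⟨hLA, hLcard⟩ := mem_powersetCard.1 hLA
    rw [card_filter_powersetCard_subset L s k (hLA.trans (hH A hA).1)
      ((card_le_card hLA).trans_eq (hH A hA).2), hLcard]
  calc (#s).choose k = #(s.powersetCard k) := (card_powersetCard k s).symm
    _ ≤ #(shadow.biUnion fun L => (s.powersetCard k).filter (L ⊆ ·)) := card_le_card hcovered
    _ ≤ #shadow * (#s - ℓ).choose (k - ℓ) :=
        card_biUnion_le_card_mul _ _ _ fun L hL => (hfiber L hL).le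
    _ ≤ #H * k.choose ℓ * (#s - ℓ).choose (k - ℓ) := Nat.mul_le_mul_right _ hshadow

theorem Nat.choose_le_mul_choose_sq_of_choose_le {n k ℓ m : ℕ} (hlk : ℓ ≤ k) (hkn : k ≤ n)
    (h : n.choose k ≤ m * k.choose ℓ * (n - ℓ).choose (k - ℓ)) :
    n.choose ℓ ≤ m * k.choose ℓ ^ 2 := by
  refine Nat.le_of_mul_le_mul_right ?_ (Nat.choose_pos (Nat.sub_le_sub_right hkn ℓ))
  calc n.choose ℓ * (n - ℓ).choose (k - ℓ) = n.choose k * k.choose ℓ := (Nat.choose_mul hlk).symm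
    _ ≤ m * k.choose ℓ * (n - ℓ).choose (k - ℓ) * k.choose ℓ := Nat.mul_le_mul_right _ h
    _ = m * k.choose ℓ ^ 2 * (n - ℓ).choose (k - ℓ) := by ring

/-- For ℓ ≤ k ≤ n there exists an ℓ-disjoint k-uniform hypergraph on n vertices
with at least ⌈C(n,ℓ)/C(k,ℓ)²⌉ edges. -/
theorem stmt1 (n k ℓ : ℕ) (hlk : ℓ ≤ k) (hkn : k ≤ n) :
    ∃ H : Finset (Finset ℕ),
      (∀ A ∈ H, A ⊆ Finset.range n ∧ A.card = k) ∧
      (∀ A ∈ H, ∀ B ∈ H, A ≠ B → (A ∩ B).card < ℓ) ∧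
      (⌈(n.choose ℓ : ℚ) / (k.choose ℓ : ℚ) ^ 2⌉ : ℤ) ≤ H.card := by
  obtain ⟨H, hHΩ, hdisj, hmax⟩ :=
    ((range n).powersetCard k).exists_maximal_pairwise_card_inter_lt ℓ
  have hmem : ∀ A ∈ H, A ⊆ range n ∧ #A = k := fun A hA => mem_powersetCard.1 (hHΩ hA)
  have hcover : ∀ K ∈ (range n).powersetCard k, ∃ A ∈ H, ℓ ≤ #(K ∩ A) := by
    intro K hK
    by_cases hKH : K ∈ H
    · exact ⟨K, hKH, by rw [inter_self, (hmem K hKH).2]; exact hlk⟩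
    · exact hmax K hK hKH
  have hbound : n.choose ℓ ≤ #H * k.choose ℓ ^ 2 :=
    Nat.choose_le_mul_choose_sq_of_choose_le hlk hkn
      (by simpa only [card_range] using choose_le_card_mul_of_forall_exists_card_inter hmem hcover)
  refine ⟨H, hmem, fun A hA B hB => hdisj hA hB, ?_⟩
  rw [Int.ceil_le, div_le_iff₀ (by positivity [Nat.choose_pos hlk])]
  exact_mod_cast hbound
end

section
/- Let F be a (k,d)-CSP in which every variable occurs in at most d^k/(e·k) constraints. Then F is satisfiable. -/
/-!
Under the uniform distribution on assignments of the variables occurring in `F`, a constraint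
is violated with probability `d⁻ᵏ`, independently of any family of constraints sharing no
variable with it; and a constraint shares a variable with at most `k · dᵏ / (e k) = dᵏ / e`
constraints, itself included. So the symmetric local lemma `e p (D + 1) ≤ 1` applies.

The local lemma is proved in counting form by the usual induction: given that the events in
`S ∌ i` are avoided, `A i` has conditional probability at most `x`. Split `S` into the
neighbours `S₁` and non-neighbours `S₂` of `i`; then `#(avoiding S ∩ A i)` is at most
`p · #(avoiding S₂)`, while adding the events of `S₁` one at a time to `S₂` loses at most a
factor `(1 - x)` each, by induction; `p ≤ x (1 - x)ᴰ` closes the estimate.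
-/

open Finset

namespace LovaszLocalLemma

variable {Ω ι : Type*} [Fintype Ω] [DecidableEq Ω]

def avoiding (A : ι → Finset Ω) (S : Finset ι) : Finset Ω :=
  univ \ S.biUnion A

variable {A : ι → Finset Ω}

@[simp]
lemma mem_avoiding {S : Finset ι} {ω : Ω} : ω ∈ avoiding A S ↔ ∀ i ∈ S, ω ∉ A i := by
  simp [avoiding]

@[simp]
lemma avoiding_empty : avoiding A ∅ = univ := by
  ext; simp

lemma avoiding_subset_avoiding {S T : Finset ι} (h : S ⊆ T) : avoiding A T ⊆ avoiding A S :=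
  fun _ hω ↦ mem_avoiding.2 fun i hi ↦ mem_avoiding.1 hω i (h hi)

variable [DecidableEq ι]

lemma avoiding_insert (i : ι) (S : Finset ι) :
    avoiding A (insert i S) = avoiding A S \ A i := by
  ext; simp [and_comm]

lemma one_sub_mul_card_avoiding_le {x : ℝ} {i : ι} {S : Finset ι}
    (h : (#(avoiding A S ∩ A i) : ℝ) ≤ x * #(avoiding A S)) :
    (1 - x) * #(avoiding A S) ≤ #(avoiding A (insert i S)) := by
  have := card_sdiff_add_card_inter (avoiding A S) (A i)
  rw [← avoiding_insert] at this
  have : (#(avoiding A (insert i S)) : ℝ) + #(avoiding A S ∩ A i) = #(avoiding A S) := by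
    exact_mod_cast this
  linarith

lemma one_sub_pow_mul_card_avoiding_le {x : ℝ} (hx : x ≤ 1) {U T : Finset ι}
    (hUT : Disjoint U T)
    (h : ∀ a ∈ T, ∀ T' ⊆ T, a ∉ T' →
      (#(avoiding A (U ∪ T') ∩ A a) : ℝ) ≤ x * #(avoiding A (U ∪ T'))) :
    (1 - x) ^ #T * #(avoiding A U) ≤ #(avoiding A (U ∪ T)) := by
  induction T using Finset.induction_on with
  | empty => simp only [card_empty, pow_zero, one_mul, union_empty, le_refl]
  | insert a T haT ih =>
    have hUT' : Disjoint U T := disjoint_of_subset_right (subset_insert a T) hUT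
    have ih := ih hUT' fun b hb T' hT' hbT' ↦ h b (mem_insert_of_mem hb) T'
      (hT'.trans (subset_insert a T)) hbT'
    have hstep := one_sub_mul_card_avoiding_le (h a (mem_insert_self a T) T
      (subset_insert a T) haT)
    rw [card_insert_of_notMem haT, union_insert]
    calc (1 - x) ^ (#T + 1) * #(avoiding A U)
        = (1 - x) * ((1 - x) ^ #T * #(avoiding A U)) := by ring
      _ ≤ (1 - x) * #(avoiding A (U ∪ T)) := by gcongr
      _ ≤ _ := hstep

variable (A) in
/-- Counting form of a dependency graph with bound `p`: under the uniform measure on `Ω`, the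
conditional probability of `A i` given that the events of any family of non-neighbours of `i`
are avoided is at most `p`. -/
def IsDependencyGraph (G : SimpleGraph ι) [DecidableRel G.Adj] (F : Finset ι) (p : ℝ) : Prop :=
  ∀ i ∈ F, ∀ S ⊆ F, i ∉ S → (∀ j ∈ S, ¬ G.Adj i j) →
    (#(avoiding A S ∩ A i) : ℝ) ≤ p * #(avoiding A S)

variable {G : SimpleGraph ι} [DecidableRel G.Adj] {F : Finset ι} {p x : ℝ} {D : ℕ}

theorem card_avoiding_inter_le (hG : IsDependencyGraph A G F p)
    (hD : ∀ i ∈ F, #(F.filter (G.Adj i)) ≤ D) (hx₀ : 0 ≤ x) (hx₁ : x ≤ 1)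
    (hp : p ≤ x * (1 - x) ^ D) {S : Finset ι} (hSF : S ⊆ F) {i : ι} (hi : i ∈ F)
    (hiS : i ∉ S) : (#(avoiding A S ∩ A i) : ℝ) ≤ x * #(avoiding A S) := by
  induction S using Finset.strongInduction generalizing i with
  | H S ih =>
  set S₁ := S.filter (G.Adj i)
  set S₂ := S.filter (¬ G.Adj i ·)
  have hS₁₂ : S₂ ∪ S₁ = S := by rw [union_comm]; exact filter_union_filter_not_eq _ S
  have hS₁ : #S₁ ≤ D := (card_le_card (filter_subset_filter _ hSF)).trans (hD i hi)
  have hgrow : (1 - x) ^ #S₁ * #(avoiding A S₂) ≤ #(avoiding A S) := by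
    rw [← hS₁₂]
    refine one_sub_pow_mul_card_avoiding_le hx₁ (disjoint_filter_filter_not _ _ _).symm ?_
    intro a ha T hT haT
    have haS : a ∈ S := mem_of_mem_filter a ha
    have haS₂ : a ∉ S₂ := fun h ↦ (mem_filter.1 h).2 (mem_filter.1 ha).2
    have hsub : S₂ ∪ T ⊆ S := union_subset (filter_subset _ _) (hT.trans (filter_subset _ _))
    exact ih _ ((ssubset_iff_of_subset hsub).2 ⟨a, haS, by simp [haS₂, haT]⟩) (hsub.trans hSF)
      (hSF haS) (by simp [haS₂, haT])
  have hdep : (#(avoiding A S₂ ∩ A i) : ℝ) ≤ p * #(avoiding A S₂) :=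
    hG i hi S₂ ((filter_subset _ _).trans hSF) (fun h ↦ hiS (mem_of_mem_filter i h))
      fun j hj ↦ (mem_filter.1 hj).2
  calc (#(avoiding A S ∩ A i) : ℝ)
      ≤ #(avoiding A S₂ ∩ A i) := by
        gcongr; exact avoiding_subset_avoiding (filter_subset _ _)
    _ ≤ p * #(avoiding A S₂) := hdep
    _ ≤ x * (1 - x) ^ D * #(avoiding A S₂) := by gcongr
    _ ≤ x * (1 - x) ^ #S₁ * #(avoiding A S₂) := by
        have := pow_le_pow_of_le_one (by linarith : 0 ≤ 1 - x) (by linarith) hS₁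
        gcongr
    _ ≤ x * #(avoiding A S) := by rw [mul_assoc]; gcongr

theorem avoiding_nonempty [Nonempty Ω] (hG : IsDependencyGraph A G F p)
    (hD : ∀ i ∈ F, #(F.filter (G.Adj i)) ≤ D) (hx₀ : 0 ≤ x) (hx₁ : x < 1)
    (hp : p ≤ x * (1 - x) ^ D) : (avoiding A F).Nonempty := by
  suffices ∀ S ⊆ F, (0 : ℝ) < #(avoiding A S) from
    card_pos.1 (by exact_mod_cast this F subset_rfl)
  intro S
  induction S using Finset.induction_on with
  | empty => simp [Fintype.card_pos]
  | insert i S hiS ih =>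
    intro hSF
    have hS := insert_subset_iff.1 hSF
    calc (0 : ℝ) < (1 - x) * #(avoiding A S) := mul_pos (by linarith) (ih hS.2)
      _ ≤ #(avoiding A (insert i S)) := one_sub_mul_card_avoiding_le
        (card_avoiding_inter_le hG hD hx₀ hx₁.le hp hS.2 hS.1 hiS)

lemma exp_neg_one_le_one_sub_inv_pow (n : ℕ) : Real.exp (-1) ≤ (1 - 1 / (n + 1 : ℝ)) ^ n := by
  rcases n.eq_zero_or_pos with rfl | hn
  · simp
  have : 1 - 1 / (n + 1 : ℝ) = (1 + (n : ℝ)⁻¹)⁻¹ := by field_simp; ring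
  rw [this, inv_pow, Real.exp_neg]
  exact inv_anti₀ (by positivity) Real.one_add_inv_pow_le_exp

theorem avoiding_nonempty_of_exp_mul_le [Nonempty Ω] (hG : IsDependencyGraph A G F p)
    (hD : ∀ i ∈ F, #(F.filter (G.Adj i)) ≤ D) (hp₀ : 0 ≤ p)
    (hp : Real.exp 1 * p * (D + 1) ≤ 1) : (avoiding A F).Nonempty := by
  have hpe : p * (D + 1) ≤ Real.exp (-1) := by
    rw [Real.exp_neg, ← one_div, le_div_iff₀ (Real.exp_pos 1)]; linarith
  rcases D.eq_zero_or_pos with rfl | hD₀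
  · -- `x = 1 / (D + 1)` would be `1` here, so take `x = p`
    have hp₁ : p < 1 := by
      rw [Nat.cast_zero, zero_add, mul_one] at hp
      nlinarith [Real.exp_one_gt_d9]
    exact avoiding_nonempty hG hD hp₀ hp₁ (by simp)
  · refine avoiding_nonempty hG hD (x := 1 / (D + 1)) (by positivity) ?_ ?_
    · rw [div_lt_one (by positivity)]; exact_mod_cast Nat.lt_add_of_pos_left hD₀
    · calc p = 1 / (D + 1) * (p * (D + 1)) := by field_simp
        _ ≤ 1 / (D + 1) * (1 - 1 / (D + 1)) ^ D := by
          gcongr; exact hpe.trans (exp_neg_one_le_one_sub_inv_pow D)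

end LovaszLocalLemma

open LovaszLocalLemma

namespace CSP

variable {V R : Type*} [DecidableEq V] [DecidableEq R]

def constraintGraph : SimpleGraph (Finset (V × R)) :=
  SimpleGraph.fromRel fun B C ↦ ¬ Disjoint (B.image Prod.fst) (C.image Prod.fst)

instance : DecidableRel (constraintGraph (V := V) (R := R)).Adj :=
  inferInstanceAs (DecidableRel fun B C : Finset (V × R) ↦ B ≠ C ∧
    (¬ Disjoint (B.image Prod.fst) (C.image Prod.fst) ∨
      ¬ Disjoint (C.image Prod.fst) (B.image Prod.fst)))

lemma card_filter_constraintGraph_adj_add_one_le {F : Finset (Finset (V × R))}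
    {C : Finset (V × R)} (hC : C ∈ F) (hne : (C.image Prod.fst).Nonempty) :
    #(F.filter (constraintGraph.Adj C)) + 1
      ≤ ∑ v ∈ C.image Prod.fst, #(F.filter fun B ↦ v ∈ B.image Prod.fst) := by
  have hsub : insert C (F.filter (constraintGraph.Adj C))
      ⊆ (C.image Prod.fst).biUnion fun v ↦ F.filter fun B ↦ v ∈ B.image Prod.fst := by
    refine insert_subset ?_ fun B hB ↦ ?_
    · obtain ⟨v, hv⟩ := hne
      exact mem_biUnion.2 ⟨v, hv, mem_filter.2 ⟨hC, hv⟩⟩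
    · obtain ⟨hBF, -, hCB⟩ := mem_filter.1 hB
      obtain ⟨v, hvC, hvB⟩ : ∃ v ∈ C.image Prod.fst, v ∈ B.image Prod.fst := by
        rcases hCB with h | h
        · exact not_disjoint_iff.1 h
        · obtain ⟨v, hvB, hvC⟩ := not_disjoint_iff.1 h; exact ⟨v, hvC, hvB⟩
      exact mem_biUnion.2 ⟨v, hvC, mem_filter.2 ⟨hBF, hvB⟩⟩
  calc #(F.filter (constraintGraph.Adj C)) + 1
      = #(insert C (F.filter (constraintGraph.Adj C))) :=
        (card_insert_of_notMem fun h ↦ (mem_filter.1 h).2.1 rfl).symm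
    _ ≤ _ := (card_le_card hsub).trans card_biUnion_le

variable [Fintype R]

def violators (U : Finset V) (C : Finset (V × R)) : Finset (U → R) :=
  univ.filter fun β ↦ ∀ p ∈ C, ∀ h : p.1 ∈ U, β ⟨p.1, h⟩ = p.2

@[simp]
lemma mem_violators {U : Finset V} {C : Finset (V × R)} {β : U → R} :
    β ∈ violators U C ↔ ∀ p ∈ C, ∀ h : p.1 ∈ U, β ⟨p.1, h⟩ = p.2 := by
  simp [violators]

lemma mem_violators_iff_of_eqOn {U : Finset V} {C : Finset (V × R)} {β β' : U → R}
    (h : ∀ u : U, u.1 ∈ C.image Prod.fst → β u = β' u) :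
    β ∈ violators U C ↔ β' ∈ violators U C := by
  simp only [mem_violators]
  refine forall₂_congr fun p hp ↦ forall_congr' fun hpU ↦ ?_
  rw [h _ (mem_image_of_mem _ hp)]

lemma apply_eq_of_mem_violators {U : Finset V} {C : Finset (V × R)} {β β' : U → R}
    (hβ : β ∈ violators U C) (hβ' : β' ∈ violators U C) {u : U}
    (hu : u.1 ∈ C.image Prod.fst) : β u = β' u := by
  obtain ⟨p, hp, hpu⟩ := mem_image.1 hu
  have hpU : p.1 ∈ U := hpu ▸ u.2
  obtain rfl : (⟨p.1, hpU⟩ : U) = u := Subtype.ext hpu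
  rw [mem_violators.1 hβ p hp, mem_violators.1 hβ' p hp]

/-- Violating `C` pins down the values on the variables of `C`; reassigning them freely while
keeping the other values is injective and does not affect constraints with disjoint variables. -/
lemma card_avoiding_inter_violators_mul_le {U : Finset V} {C : Finset (V × R)}
    {S : Finset (Finset (V × R))} (hCU : C.image Prod.fst ⊆ U)
    (hS : ∀ B ∈ S, Disjoint (B.image Prod.fst) (C.image Prod.fst)) :
    #(avoiding (violators U) S ∩ violators U C) * Fintype.card R ^ #(C.image Prod.fst)
      ≤ #(avoiding (violators U) S) := by
  set W := C.image Prod.fst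
  let reassign : (U → R) × (W → R) → U → R := fun βc u ↦
    if h : u.1 ∈ W then βc.2 ⟨u.1, h⟩ else βc.1 u
  have hreassign : ∀ βc : (U → R) × (W → R), ∀ u : U, u.1 ∉ W → reassign βc u = βc.1 u :=
    fun βc u hu ↦ dif_neg hu
  have hinj := card_le_card_of_injOn reassign
    (s := (avoiding (violators U) S ∩ violators U C) ×ˢ univ) (t := avoiding (violators U) S)
    ?mapsTo ?injOn
  · simpa [card_product, Fintype.card_fun] using hinj
  case mapsTo =>
    rintro ⟨β, c⟩ hβc
    simp only [coe_product, coe_inter, coe_univ, Set.mem_prod, Set.mem_inter_iff, mem_coe,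
      Set.mem_univ, and_true] at hβc
    refine mem_avoiding.2 fun B hB ↦ ?_
    rw [mem_violators_iff_of_eqOn fun u hu ↦ hreassign _ u
      (disjoint_left.1 (hS B hB) hu)]
    exact mem_avoiding.1 hβc.1 B hB
  case injOn =>
    rintro ⟨β, c⟩ hβc ⟨β', c'⟩ hβc' heq
    simp only [coe_product, coe_inter, coe_univ, Set.mem_prod, Set.mem_inter_iff, mem_coe,
      Set.mem_univ, and_true] at hβc hβc'
    refine Prod.ext (funext fun u ↦ ?_) (funext fun w ↦ ?_)
    · by_cases hu : u.1 ∈ W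
      · exact apply_eq_of_mem_violators hβc.2 hβc'.2 hu
      · simpa [hreassign _ u hu] using congrFun heq u
    · simpa [reassign, w.2] using congrFun heq ⟨w.1, hCU w.2⟩

lemma isDependencyGraph_constraintGraph [Nonempty R] {U : Finset V}
    {F : Finset (Finset (V × R))} {k : ℕ}
    (hF : ∀ C ∈ F, C.image Prod.fst ⊆ U ∧ #(C.image Prod.fst) = k) :
    IsDependencyGraph (violators U) constraintGraph F (1 / Fintype.card R ^ k) := by
  intro C hC S _ hCS hS
  have hdisj : ∀ B ∈ S, Disjoint (B.image Prod.fst) (C.image Prod.fst) := fun B hB ↦ by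
    have := hS B hB
    simp only [constraintGraph, SimpleGraph.fromRel_adj, ne_eq, not_and, not_or,
      not_not] at this
    exact (this fun h ↦ hCS (h ▸ hB)).2
  have hcount := card_avoiding_inter_violators_mul_le (S := S) (hF C hC).1 hdisj
  rw [(hF C hC).2] at hcount
  rw [one_div_mul_eq_div, le_div_iff₀ (by positivity)]
  exact_mod_cast hcount

theorem exists_forall_satisfies_of_exp_mul_le [Nonempty R] {F : Finset (Finset (V × R))}
    {k D : ℕ} (hk : ∀ C ∈ F, #(C.image Prod.fst) = k)
    (hD : ∀ C ∈ F, #(F.filter (constraintGraph.Adj C)) ≤ D)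
    (h : Real.exp 1 * (D + 1) ≤ Fintype.card R ^ k) :
    ∃ α : V → R, ∀ C ∈ F, ∃ p ∈ C, α p.1 ≠ p.2 := by
  set U := F.biUnion (·.image Prod.fst)
  have hF : ∀ C ∈ F, C.image Prod.fst ⊆ U ∧ #(C.image Prod.fst) = k :=
    fun C hC ↦ ⟨subset_biUnion_of_mem _ hC, hk C hC⟩
  have hp : Real.exp 1 * (1 / Fintype.card R ^ k) * (D + 1) ≤ 1 := by
    rw [mul_one_div, div_mul_eq_mul_div, div_le_one (by positivity)]
    exact h
  obtain ⟨β, hβ⟩ := avoiding_nonempty_of_exp_mul_le (isDependencyGraph_constraintGraph hF) hD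
    (by positivity) hp
  refine ⟨fun v ↦ if h : v ∈ U then β ⟨v, h⟩ else Classical.arbitrary R, fun C hC ↦ ?_⟩
  have hβC := mem_avoiding.1 hβ C hC
  simp only [mem_violators, not_forall] at hβC
  obtain ⟨p, hp, hpU, hne⟩ := hβC
  exact ⟨p, hp, by simpa [hpU] using hne⟩

end CSP

/-- A (k,d)-CSP in which every variable occurs in at most d^k/(e·k) constraints
is satisfiable.  A constraint is a set of k literals `x ≠ b` (pairs (x,b)) over
k distinct variables; an assignment satisfies it if some variable avoids its
forbidden value. -/
theorem stmt4 {V : Type*} [DecidableEq V] (k d : ℕ) (hk : 1 ≤ k) (hd : 2 ≤ d)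
    (F : Finset (Finset (V × Fin d)))
    (hcard : ∀ C ∈ F, C.card = k ∧ (C.image Prod.fst).card = k)
    (hdeg : ∀ x : V, ((F.filter (fun C => x ∈ C.image Prod.fst)).card : ℝ)
      ≤ (d : ℝ) ^ k / (Real.exp 1 * k)) :
    ∃ α : V → Fin d, ∀ C ∈ F, ∃ p ∈ C, α p.1 ≠ p.2 := by
  have : Nonempty (Fin d) := ⟨⟨0, by omega⟩⟩
  obtain rfl | ⟨C₀, hC₀⟩ := F.eq_empty_or_nonempty
  · exact ⟨fun _ ↦ Classical.arbitrary _, by simp⟩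
  have hnbrs : ∀ C ∈ F,
      (#(F.filter (CSP.constraintGraph.Adj C)) + 1 : ℝ) ≤ d ^ k / Real.exp 1 := by
    intro C hC
    have hne : (C.image Prod.fst).Nonempty := card_pos.1 (by have := (hcard C hC).2; omega)
    calc (#(F.filter (CSP.constraintGraph.Adj C)) + 1 : ℝ)
        ≤ ∑ v ∈ C.image Prod.fst, (#(F.filter fun B ↦ v ∈ B.image Prod.fst) : ℝ) := by
          exact_mod_cast CSP.card_filter_constraintGraph_adj_add_one_le hC hne
      _ ≤ ∑ v ∈ C.image Prod.fst, (d : ℝ) ^ k / (Real.exp 1 * k) := sum_le_sum fun v _ ↦ hdeg v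
      _ = d ^ k / Real.exp 1 := by
          rw [sum_const, (hcard C hC).2, nsmul_eq_mul]
          field_simp
  have hfloor : ∀ C ∈ F,
      #(F.filter (CSP.constraintGraph.Adj C)) + 1 ≤ ⌊(d : ℝ) ^ k / Real.exp 1⌋₊ :=
    fun C hC ↦ Nat.le_floor (by exact_mod_cast hnbrs C hC)
  refine CSP.exists_forall_satisfies_of_exp_mul_le (fun C hC ↦ (hcard C hC).2)
    (D := ⌊(d : ℝ) ^ k / Real.exp 1⌋₊ - 1) (fun C hC ↦ by have := hfloor C hC; omega) ?_
  have := hfloor C₀ hC₀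
  rw [Fintype.card_fin, Nat.cast_sub (by omega), Nat.cast_one, sub_add_cancel, mul_comm,
    ← le_div_iff₀ (Real.exp_pos 1)]
  exact Nat.floor_le (by positivity)
end

section
/- If each constraint of a (k,d)-CSP F shares a variable with at most e^{-1}·d^k − 1 other constraints, then F is satisfiable. -/
set_option linter.unusedSectionVars false
set_option linter.unusedVariables false

open Finset

section LLL
variable {Ω ι : Type*} [Fintype Ω] [DecidableEq Ω] [DecidableEq ι]

def avoidB (B : ι → Finset Ω) (S : Finset ι) : Finset Ω :=
  Finset.univ.filter (fun ω => ∀ j ∈ S, ω ∉ B j)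

lemma mem_avoidB {B : ι → Finset Ω} {S : Finset ι} {ω : Ω} :
    ω ∈ avoidB B S ↔ ∀ j ∈ S, ω ∉ B j := by simp [avoidB]

lemma avoidB_anti {B : ι → Finset Ω} {S T : Finset ι} (h : S ⊆ T) :
    avoidB B T ⊆ avoidB B S := fun ω hω => mem_avoidB.2 fun j hj => mem_avoidB.1 hω j (h hj)

lemma avoidB_insert {B : ι → Finset Ω} {S : Finset ι} {i : ι} :
    avoidB B (insert i S) = avoidB B S \ B i := by
  ext ω; simp only [mem_avoidB, mem_sdiff, mem_insert]
  constructor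
  · intro h; exact ⟨fun j hj => h j (Or.inr hj), h i (Or.inl rfl)⟩
  · rintro ⟨h1, h2⟩ j (rfl | hj); · exact h2
    · exact h1 j hj

lemma lll_claim (B : ι → Finset Ω) (N : ι → Finset ι) (I : Finset ι) (D : ℕ) (p x : ℝ)
    (hx0 : 0 < x) (hx1 : x < 1) (hp0 : 0 ≤ p) (hpx : p ≤ x * (1-x)^D)
    (hΩ : 0 < Fintype.card Ω)
    (hD : ∀ i ∈ I, (((N i ∩ I) \ {i}).card) ≤ D)
    (hP : ∀ i ∈ I, ((B i).card : ℝ) ≤ p * (Fintype.card Ω))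
    (hind : ∀ i ∈ I, ∀ S ⊆ I, (∀ j ∈ S, j ∉ N i) →
      ((B i ∩ avoidB B S).card : ℝ) * (Fintype.card Ω) = ((B i).card : ℝ) * ((avoidB B S).card)) :
    ∀ n : ℕ, ∀ S ⊆ I, S.card = n → ∀ i ∈ I, i ∉ S →
      (1 - x) * ((avoidB B S).card : ℝ) ≤ ((avoidB B (insert i S)).card : ℝ) := by
  have h1x : (0:ℝ) ≤ 1 - x := by linarith
  intro n
  induction n using Nat.strong_induction_on with
  | _ n IH =>
    intro S hSI hcard i hiI hiS
    set S1 : Finset ι := S ∩ N i with hS1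
    set S2 : Finset ι := S \ N i with hS2
    have hS2I : S2 ⊆ I := (sdiff_subset).trans hSI
    have hS1S : S1 ⊆ S := inter_subset_left
    have hunion : S2 ∪ S1 = S := by
      ext j; simp only [hS1, hS2, mem_union, mem_sdiff, mem_inter]; tauto
    -- auxiliary: adding elements of S1 to S2 loses at most (1-x) each
    have aux : ∀ T ⊆ S1, ((1-x)^T.card) * ((avoidB B S2).card : ℝ)
        ≤ ((avoidB B (S2 ∪ T)).card : ℝ) := by
      intro T
      induction T using Finset.induction_on with
      | empty => simp
      | @insert a T ha IH2 =>
        intro hTsub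
        have haS1 : a ∈ S1 := hTsub (mem_insert_self a T)
        have hTs : T ⊆ S1 := (subset_insert a T).trans hTsub
        have haS : a ∈ S := hS1S haS1
        have haNi : a ∈ N i := (mem_inter.1 haS1).2
        have haS2 : a ∉ S2 := by simp [hS2, haNi]
        have haST : a ∉ S2 ∪ T := by simp [mem_union, haS2, ha]
        have hsub' : S2 ∪ T ⊆ I := union_subset hS2I ((hTs.trans hS1S).trans hSI)
        have hsubS : S2 ∪ T ⊆ S.erase a := by
          intro j hj
          rcases mem_union.1 hj with h | h
          · exact mem_erase.2 ⟨fun h' => haS2 (h' ▸ h), sdiff_subset h⟩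
          · exact mem_erase.2 ⟨fun h' => ha (h' ▸ h), hS1S (hTs h)⟩
        have hlt : (S2 ∪ T).card < n := by
          have h1 := card_le_card hsubS
          have h2 : (S.erase a).card < S.card := card_erase_lt_of_mem haS
          omega
        have step := IH _ hlt (S2 ∪ T) hsub' rfl a (hSI haS) haST
        rw [union_insert, card_insert_of_notMem ha, pow_succ]
        have hIH2 := IH2 hTs
        calc (1-x)^T.card * (1-x) * ((avoidB B S2).card : ℝ)
            = (1-x) * ((1-x)^T.card * ((avoidB B S2).card : ℝ)) := by ring
          _ ≤ (1-x) * ((avoidB B (S2 ∪ T)).card : ℝ) :=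
              mul_le_mul_of_nonneg_left hIH2 h1x
          _ ≤ ((avoidB B (insert a (S2 ∪ T))).card : ℝ) := step
    have hauxS1 := aux S1 (Subset.refl S1)
    rw [hunion] at hauxS1
    -- disjointness of S2 from N i
    have hdisj : ∀ j ∈ S2, j ∉ N i := fun j hj => (mem_sdiff.1 hj).2
    -- independence bound
    have hindep := hind i hiI S2 hS2I hdisj
    have hBi := hP i hiI
    have ha2 : (0:ℝ) ≤ ((avoidB B S2).card : ℝ) := Nat.cast_nonneg _
    have hM : (0:ℝ) < (Fintype.card Ω : ℝ) := by exact_mod_cast hΩ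
    have hstep1 : ((B i ∩ avoidB B S2).card : ℝ) ≤ p * ((avoidB B S2).card : ℝ) := by
      have h1 : ((B i ∩ avoidB B S2).card : ℝ) * (Fintype.card Ω)
          ≤ (p * ((avoidB B S2).card : ℝ)) * (Fintype.card Ω) := by
        rw [hindep]; nlinarith
      exact le_of_mul_le_mul_right h1 hM
    -- subset chain
    have hsubchain : avoidB B S ∩ B i ⊆ B i ∩ avoidB B S2 := by
      intro ω hω
      rcases mem_inter.1 hω with ⟨h1, h2⟩
      exact mem_inter.2 ⟨h2, avoidB_anti sdiff_subset h1⟩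
    have hS1D : S1.card ≤ D := by
      refine le_trans (card_le_card ?_) (hD i hiI)
      intro j hj
      rcases mem_inter.1 hj with ⟨hjS, hjN⟩
      exact mem_sdiff.2 ⟨mem_inter.2 ⟨hjN, hSI hjS⟩, by simp; rintro rfl; exact hiS hjS⟩
    have hpow : (1-x)^D ≤ (1-x)^S1.card := pow_le_pow_of_le_one h1x (by linarith) hS1D
    have key : ((avoidB B S ∩ B i).card : ℝ) ≤ x * ((avoidB B S).card : ℝ) := by
      have c1 : ((avoidB B S ∩ B i).card : ℝ) ≤ ((B i ∩ avoidB B S2).card : ℝ) := by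
        exact_mod_cast card_le_card hsubchain
      have c2 : p * ((avoidB B S2).card : ℝ) ≤ x * (1-x)^S1.card * ((avoidB B S2).card : ℝ) := by
        have : p ≤ x * (1-x)^S1.card := le_trans hpx (by nlinarith)
        nlinarith
      have c3 : x * (1-x)^S1.card * ((avoidB B S2).card : ℝ) ≤ x * ((avoidB B S).card : ℝ) := by
        nlinarith
      linarith
    rw [avoidB_insert]
    have hcards := card_sdiff_add_card_inter (avoidB B S) (B i)
    have hcards' : ((avoidB B S \ B i).card : ℝ) + ((avoidB B S ∩ B i).card : ℝ)
        = ((avoidB B S).card : ℝ) := by exact_mod_cast congrArg (Nat.cast (R := ℝ)) hcards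
    linarith

theorem lll_count {Ω ι : Type*} [Fintype Ω] [DecidableEq Ω] [DecidableEq ι]
    (B : ι → Finset Ω) (N : ι → Finset ι) (I : Finset ι) (D : ℕ) (p x : ℝ)
    (hx0 : 0 < x) (hx1 : x < 1) (hp0 : 0 ≤ p) (hpx : p ≤ x * (1-x)^D)
    (hΩ : 0 < Fintype.card Ω)
    (hD : ∀ i ∈ I, (((N i ∩ I) \ {i}).card) ≤ D)
    (hP : ∀ i ∈ I, ((B i).card : ℝ) ≤ p * (Fintype.card Ω))
    (hind : ∀ i ∈ I, ∀ S ⊆ I, (∀ j ∈ S, j ∉ N i) →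
      ((B i ∩ avoidB B S).card : ℝ) * (Fintype.card Ω) = ((B i).card : ℝ) * ((avoidB B S).card)) :
    ∃ ω : Ω, ∀ i ∈ I, ω ∉ B i := by
  have h1x : (0:ℝ) < 1 - x := by linarith
  have claim := lll_claim B N I D p x hx0 hx1 hp0 hpx hΩ hD hP hind
  have main : ∀ S ⊆ I, (1-x)^S.card * ((Fintype.card Ω : ℝ)) ≤ ((avoidB B S).card : ℝ) := by
    intro S
    induction S using Finset.induction_on with
    | empty => simp [avoidB]
    | @insert i S hi IH =>
      intro hsub
      have hSI : S ⊆ I := (Finset.subset_insert i S).trans hsub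
      have hiI : i ∈ I := hsub (Finset.mem_insert_self i S)
      have hc := claim S.card S hSI rfl i hiI hi
      rw [Finset.card_insert_of_notMem hi, pow_succ]
      calc (1-x)^S.card * (1-x) * ((Fintype.card Ω : ℝ))
          = (1-x) * ((1-x)^S.card * (Fintype.card Ω : ℝ)) := by ring
        _ ≤ (1-x) * ((avoidB B S).card : ℝ) := mul_le_mul_of_nonneg_left (IH hSI) h1x.le
        _ ≤ ((avoidB B (insert i S)).card : ℝ) := hc
  have hfin := main I (Finset.Subset.refl I)
  have hpos : (0:ℝ) < ((avoidB B I).card : ℝ) := by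
    refine lt_of_lt_of_le ?_ hfin
    have : (0:ℝ) < (Fintype.card Ω : ℝ) := by exact_mod_cast hΩ
    positivity
  obtain ⟨ω, hω⟩ := Finset.card_pos.mp (by exact_mod_cast hpos)
  exact ⟨ω, fun i hi => mem_avoidB.1 hω i hi⟩

/-- Independence counting for events determined by complementary coordinates. -/
theorem indep_count {Ω A C : Type*} [Fintype A] [Fintype C] [DecidableEq Ω] [Fintype Ω]
    [DecidableEq A] [DecidableEq C]
    (e : Ω ≃ A × C) (X Y : Finset Ω)
    (hX : ∀ ω ω' : Ω, (e ω).1 = (e ω').1 → ω ∈ X → ω' ∈ X)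
    (hY : ∀ ω ω' : Ω, (e ω).2 = (e ω').2 → ω ∈ Y → ω' ∈ Y) :
    (X ∩ Y).card * Fintype.card Ω = X.card * Y.card := by
  classical
  set PA : Finset A := Finset.univ.filter (fun a => ∀ c, e.symm (a, c) ∈ X) with hPA
  set PC : Finset C := Finset.univ.filter (fun c => ∀ a, e.symm (a, c) ∈ Y) with hPC
  have keyX : ∀ a c, e.symm (a, c) ∈ X ↔ a ∈ PA := by
    intro a c
    constructor
    · intro h
      simp only [hPA, Finset.mem_filter, Finset.mem_univ, true_and]
      intro c'
      exact hX (e.symm (a, c)) (e.symm (a, c')) (by simp) h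
    · intro h
      simp only [hPA, Finset.mem_filter, Finset.mem_univ, true_and] at h
      exact h c
  have keyY : ∀ a c, e.symm (a, c) ∈ Y ↔ c ∈ PC := by
    intro a c
    constructor
    · intro h
      simp only [hPC, Finset.mem_filter, Finset.mem_univ, true_and]
      intro a'
      exact hY (e.symm (a, c)) (e.symm (a', c)) (by simp) h
    · intro h
      simp only [hPC, Finset.mem_filter, Finset.mem_univ, true_and] at h
      exact h a
  have himg : ∀ (s : Finset A) (t : Finset C),
      ((s ×ˢ t).image (fun q => e.symm q)).card = s.card * t.card := by
    intro s t
    rw [Finset.card_image_of_injective _ e.symm.injective, Finset.card_product]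
  have hXeq : X = (PA ×ˢ (Finset.univ : Finset C)).image (fun q => e.symm q) := by
    ext ω
    simp only [Finset.mem_image, Finset.mem_product, Finset.mem_univ, and_true]
    constructor
    · intro h
      refine ⟨e ω, ?_, by simp⟩
      have := (keyX (e ω).1 (e ω).2)
      simp only [Prod.mk.eta, Equiv.symm_apply_apply] at this
      exact this.1 h
    · rintro ⟨q, hq, rfl⟩
      exact (keyX q.1 q.2).2 (by simpa using hq)
  have hYeq : Y = ((Finset.univ : Finset A) ×ˢ PC).image (fun q => e.symm q) := by
    ext ω
    simp only [Finset.mem_image, Finset.mem_product, Finset.mem_univ, true_and]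
    constructor
    · intro h
      refine ⟨e ω, ?_, by simp⟩
      have := (keyY (e ω).1 (e ω).2)
      simp only [Prod.mk.eta, Equiv.symm_apply_apply] at this
      exact this.1 h
    · rintro ⟨q, hq, rfl⟩
      exact (keyY q.1 q.2).2 (by simpa using hq)
  have hXYeq : X ∩ Y = (PA ×ˢ PC).image (fun q => e.symm q) := by
    ext ω
    simp only [Finset.mem_inter, Finset.mem_image, Finset.mem_product]
    constructor
    · rintro ⟨h1, h2⟩
      refine ⟨e ω, ⟨?_, ?_⟩, by simp⟩
      · have := (keyX (e ω).1 (e ω).2)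
        simp only [Prod.mk.eta, Equiv.symm_apply_apply] at this
        exact this.1 h1
      · have := (keyY (e ω).1 (e ω).2)
        simp only [Prod.mk.eta, Equiv.symm_apply_apply] at this
        exact this.1 h2
    · rintro ⟨q, ⟨hq1, hq2⟩, rfl⟩
      exact ⟨(keyX q.1 q.2).2 hq1, (keyY q.1 q.2).2 hq2⟩
  have hcardΩ : Fintype.card Ω = Fintype.card A * Fintype.card C := by
    rw [Fintype.card_congr e, Fintype.card_prod]
  have c1 : (X ∩ Y).card = PA.card * PC.card := by rw [hXYeq, himg]
  have c2 : X.card = PA.card * Fintype.card C := by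
    rw [hXeq, himg, Finset.card_univ]
  have c3 : Y.card = Fintype.card A * PC.card := by
    rw [hYeq, himg, Finset.card_univ]
  rw [c1, c2, c3, hcardΩ]
  ring
end LLL
lemma lll_analytic (D : ℕ) :
    (Real.exp 1 * ((D:ℝ)+1))⁻¹ ≤ ((D:ℝ)+2)⁻¹ * (1 - ((D:ℝ)+2)⁻¹)^D := by
  have hm : (0:ℝ) < (D:ℝ)+1 := by positivity
  have hm2 : (0:ℝ) < (D:ℝ)+2 := by positivity
  have he : (0:ℝ) < Real.exp 1 := Real.exp_pos 1
  have hbase : (1 - ((D:ℝ)+2)⁻¹) = ((D:ℝ)+1)/((D:ℝ)+2) := by field_simp; ring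
  have hkey : ((D:ℝ)+2)^(D+1) ≤ Real.exp 1 * ((D:ℝ)+1)^(D+1) := by
    have h1 : (1 + ((D:ℝ)+1)⁻¹) ≤ Real.exp (((D:ℝ)+1)⁻¹) := by
      have := Real.add_one_le_exp (((D:ℝ)+1)⁻¹); linarith
    have h2 : (1 + ((D:ℝ)+1)⁻¹)^(D+1) ≤ Real.exp (((D:ℝ)+1)⁻¹)^(D+1) :=
      pow_le_pow_left₀ (by positivity) h1 (D+1)
    have h3 : Real.exp (((D:ℝ)+1)⁻¹)^(D+1) = Real.exp 1 := by
      rw [← Real.exp_nat_mul]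
      congr 1
      push_cast
      field_simp
    have h4 : ((D:ℝ)+2) = ((D:ℝ)+1) * (1 + ((D:ℝ)+1)⁻¹) := by field_simp; ring
    calc ((D:ℝ)+2)^(D+1) = ((D:ℝ)+1)^(D+1) * (1 + ((D:ℝ)+1)⁻¹)^(D+1) := by
          rw [h4, mul_pow]
      _ ≤ ((D:ℝ)+1)^(D+1) * Real.exp 1 := by
          rw [← h3]; exact mul_le_mul_of_nonneg_left h2 (by positivity)
      _ = Real.exp 1 * ((D:ℝ)+1)^(D+1) := mul_comm _ _
  have hRHS : ((D:ℝ)+2)⁻¹ * (((D:ℝ)+1)/((D:ℝ)+2))^D = ((D:ℝ)+1)^D / ((D:ℝ)+2)^(D+1) := by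
    rw [div_pow, pow_succ]
    field_simp
  rw [hbase, hRHS, inv_eq_one_div, div_le_div_iff₀ (by positivity) (by positivity)]
  have hps : Real.exp 1 * ((D:ℝ)+1)^(D+1) = ((D:ℝ)+1)^D * (Real.exp 1 * ((D:ℝ)+1)) := by
    rw [pow_succ]; ring
  nlinarith [hkey]
lemma cspB_card {V : Type*} [DecidableEq V] {d k : ℕ} (W : Finset V)
    (C : Finset (V × Fin d)) (hsub : C.image Prod.fst ⊆ W) (hk2 : (C.image Prod.fst).card = k)
    (B : Finset ({v // v ∈ W} → Fin d))
    (hBmem : ∀ ω, ω ∈ B ↔ ∀ q ∈ C, ∀ h : q.1 ∈ W, ω ⟨q.1, h⟩ = q.2) :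
    B.card ≤ d ^ (W.card - k) := by
  classical
  set T := C.image Prod.fst with hT
  have hcardtgt : Fintype.card {v : {v // v ∈ W} // (v:V) ∉ T} = (W \ T).card := by
    rw [← Fintype.card_coe (W \ T)]
    apply Fintype.card_congr
    refine ⟨fun v => ⟨v.1.1, Finset.mem_sdiff.2 ⟨v.1.2, v.2⟩⟩,
           fun w => ⟨⟨w.1, (Finset.mem_sdiff.1 w.2).1⟩, (Finset.mem_sdiff.1 w.2).2⟩, ?_, ?_⟩
    · intro v; rfl
    · intro w; rfl
  have hinj : Function.Injective
      (fun (ω : ↥B) (v : {v : {v // v ∈ W} // (v:V) ∉ T}) => ω.1 v.1) := by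
    intro ω ω' h
    apply Subtype.ext
    funext v
    by_cases hv : (v : V) ∈ T
    · obtain ⟨q, hq, hq1⟩ := Finset.mem_image.1 hv
      have hv1 : (⟨q.1, by rw [hq1]; exact v.2⟩ : {v // v ∈ W}) = v := Subtype.ext hq1
      have e1 := (hBmem ω.1).1 ω.2 q hq (by rw [hq1]; exact v.2)
      have e2 := (hBmem ω'.1).1 ω'.2 q hq (by rw [hq1]; exact v.2)
      rw [← hv1, e1, e2]
    · exact congrFun h ⟨v, hv⟩
  have hle := Fintype.card_le_of_injective _ hinj
  rw [Fintype.card_coe] at hle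
  calc B.card ≤ Fintype.card ({v : {v // v ∈ W} // (v:V) ∉ T} → Fin d) := hle
    _ = d ^ (W \ T).card := by rw [Fintype.card_fun, hcardtgt, Fintype.card_fin]
    _ = d ^ (W.card - k) := by rw [Finset.card_sdiff_of_subset hsub, hk2]

lemma csp_indep {V : Type*} [DecidableEq V] {d : ℕ} (W : Finset V) (T : Finset V)
    (X Y : Finset ({v // v ∈ W} → Fin d))
    (hX : ∀ ω ω', (∀ v : {v // v ∈ W}, (v:V) ∈ T → ω v = ω' v) → ω ∈ X → ω' ∈ X)
    (hY : ∀ ω ω', (∀ v : {v // v ∈ W}, (v:V) ∉ T → ω v = ω' v) → ω ∈ Y → ω' ∈ Y) :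
    (X ∩ Y).card * Fintype.card ({v // v ∈ W} → Fin d) = X.card * Y.card := by
  classical
  apply indep_count
    (Equiv.piEquivPiSubtypeProd (fun v : {v // v ∈ W} => (v:V) ∈ T) (fun _ => Fin d)) X Y
  · intro ω ω' h hm
    refine hX ω ω' (fun v hv => ?_) hm
    exact congrFun h ⟨v, hv⟩
  · intro ω ω' h hm
    refine hY ω ω' (fun v hv => ?_) hm
    exact congrFun h ⟨v, hv⟩
/-- If each constraint of a (k,d)-CSP shares a variable with at most
e⁻¹·d^k − 1 other constraints, then the CSP is satisfiable. -/
theorem stmt5 {V : Type*} [DecidableEq V] (k d : ℕ) (hk : 1 ≤ k) (hd : 2 ≤ d)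
    (F : Finset (Finset (V × Fin d)))
    (hcard : ∀ C ∈ F, C.card = k ∧ (C.image Prod.fst).card = k)
    (hnbr : ∀ C ∈ F,
      ((F.filter (fun D => D ≠ C ∧ ((C.image Prod.fst) ∩ (D.image Prod.fst)).Nonempty)).card : ℝ)
        ≤ (Real.exp 1)⁻¹ * (d : ℝ) ^ k - 1) :
    ∃ α : V → Fin d, ∀ C ∈ F, ∃ p ∈ C, α p.1 ≠ p.2 := by
  classical
  rcases F.eq_empty_or_nonempty with rfl | hF
  · exact ⟨fun _ => ⟨0, by omega⟩, by simp⟩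
  set W : Finset V := F.biUnion (fun C => C.image Prod.fst) with hW
  have hvarsub : ∀ C ∈ F, C.image Prod.fst ⊆ W := fun C hC v hv =>
    Finset.mem_biUnion.2 ⟨C, hC, hv⟩
  set B : Finset (V × Fin d) → Finset ({v // v ∈ W} → Fin d) := fun C =>
    Finset.univ.filter (fun ω => ∀ q ∈ C, ∀ h : q.1 ∈ W, ω ⟨q.1, h⟩ = q.2) with hB
  have hBmem : ∀ C ω, ω ∈ B C ↔ ∀ q ∈ C, ∀ h : q.1 ∈ W, ω ⟨q.1, h⟩ = q.2 := by
    intro C ω; simp [hB]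
  set N : Finset (V × Fin d) → Finset (Finset (V × Fin d)) := fun C =>
    F.filter (fun D' => ((C.image Prod.fst) ∩ (D'.image Prod.fst)).Nonempty) with hN
  set D₀ : ℕ := F.sup (fun C =>
    (F.filter (fun D' => D' ≠ C ∧ ((C.image Prod.fst) ∩ (D'.image Prod.fst)).Nonempty)).card)
    with hD₀
  set x : ℝ := ((D₀:ℝ)+2)⁻¹ with hx
  set p : ℝ := ((d:ℝ)^k)⁻¹ with hp
  have hdpos : (0:ℝ) < (d:ℝ)^k := by positivity
  have hx0 : 0 < x := by rw [hx]; positivity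
  have hx1 : x < 1 := by
    rw [hx]
    apply inv_lt_one_of_one_lt₀
    push_cast
    linarith [Nat.cast_nonneg (α := ℝ) D₀]
  have hp0 : 0 ≤ p := by rw [hp]; positivity
  -- card of Ω
  have hcardΩ : Fintype.card ({v // v ∈ W} → Fin d) = d ^ W.card := by
    rw [Fintype.card_fun, Fintype.card_fin, Fintype.card_coe]
  have hΩ : 0 < Fintype.card ({v // v ∈ W} → Fin d) := by
    rw [hcardΩ]; positivity
  -- degree bound
  have hD : ∀ C ∈ F, ((N C ∩ F) \ {C}).card ≤ D₀ := by
    intro C hC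
    have heq : (N C ∩ F) \ {C}
        = F.filter (fun D' => D' ≠ C ∧ ((C.image Prod.fst) ∩ (D'.image Prod.fst)).Nonempty) := by
      ext D'
      simp only [hN, Finset.mem_sdiff, Finset.mem_inter, Finset.mem_filter,
        Finset.mem_singleton]
      tauto
    rw [heq, hD₀]
    exact Finset.le_sup (f := fun C => (F.filter (fun D' => D' ≠ C ∧ ((C.image Prod.fst) ∩ (D'.image Prod.fst)).Nonempty)).card) hC
  -- the sup is attained
  obtain ⟨Cs, hCs, hsupeq⟩ := Finset.exists_mem_eq_sup (α := ℕ) F hF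
    ((fun C => (F.filter (fun D' => D' ≠ C ∧
      ((C.image Prod.fst) ∩ (D'.image Prod.fst)).Nonempty)).card) :
      Finset (V × Fin d) → ℕ)
  have hbound : (D₀:ℝ) ≤ (Real.exp 1)⁻¹ * (d:ℝ)^k - 1 := by
    rw [hD₀, hsupeq]; exact hnbr Cs hCs
  have he : (0:ℝ) < Real.exp 1 := Real.exp_pos 1
  have he1 : Real.exp 1 * ((D₀:ℝ)+1) ≤ (d:ℝ)^k := by
    have h1 : (D₀:ℝ)+1 ≤ (Real.exp 1)⁻¹ * (d:ℝ)^k := by linarith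
    have h2 := mul_le_mul_of_nonneg_left h1 he.le
    rwa [← mul_assoc, mul_inv_cancel₀ he.ne', one_mul] at h2
  have hpx : p ≤ x * (1-x)^D₀ := by
    have h1 : p ≤ (Real.exp 1 * ((D₀:ℝ)+1))⁻¹ := by
      rw [hp]
      apply inv_anti₀ (by positivity) he1
    exact h1.trans (lll_analytic D₀)
  -- probability bound
  have hP : ∀ C ∈ F, ((B C).card : ℝ) ≤ p * (Fintype.card ({v // v ∈ W} → Fin d)) := by
    intro C hC
    have hk2 := (hcard C hC).2
    have hsub := hvarsub C hC
    have hWk : k ≤ W.card := hk2 ▸ Finset.card_le_card hsub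
    have hcount := cspB_card W C hsub hk2 (B C) (hBmem C)
    have hrw : p * (Fintype.card ({v // v ∈ W} → Fin d) : ℝ) = (d:ℝ) ^ (W.card - k) := by
      have h2 : (d:ℝ)^(W.card-k) * (d:ℝ)^k = (d:ℝ)^W.card := by
        rw [← pow_add, Nat.sub_add_cancel hWk]
      rw [hp, hcardΩ]
      push_cast
      rw [← h2]
      field_simp
    rw [hrw]
    calc ((B C).card : ℝ) ≤ ((d ^ (W.card - k) : ℕ) : ℝ) := by exact_mod_cast hcount
      _ = (d:ℝ) ^ (W.card - k) := by push_cast; rfl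
  -- independence
  have hind : ∀ C ∈ F, ∀ S ⊆ F, (∀ j ∈ S, j ∉ N C) →
      ((B C ∩ avoidB B S).card : ℝ) * (Fintype.card ({v // v ∈ W} → Fin d))
        = ((B C).card : ℝ) * ((avoidB B S).card) := by
    intro C hC S hS hdis
    have hnat := csp_indep W (C.image Prod.fst) (B C) (avoidB B S) ?_ ?_
    · exact_mod_cast hnat
    · intro ω ω' h hm
      rw [hBmem] at hm ⊢
      intro q hq hqW
      have hqT : q.1 ∈ C.image Prod.fst := Finset.mem_image.2 ⟨q, hq, rfl⟩
      rw [← h ⟨q.1, hqW⟩ hqT]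
      exact hm q hq hqW
    · intro ω ω' h hm
      rw [mem_avoidB] at hm ⊢
      intro j hj hj'
      apply hm j hj
      rw [hBmem] at hj' ⊢
      intro q hq hqW
      have hjF : j ∈ F := hS hj
      have hnotN : j ∉ N C := hdis j hj
      have hempty : ¬((C.image Prod.fst) ∩ (j.image Prod.fst)).Nonempty := by
        intro hne
        exact hnotN (by simp [hN, hjF, hne])
      have hqT : q.1 ∉ C.image Prod.fst := by
        intro hmem
        exact hempty ⟨q.1, Finset.mem_inter.2 ⟨hmem, Finset.mem_image.2 ⟨q, hq, rfl⟩⟩⟩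
      rw [h ⟨q.1, hqW⟩ hqT]
      exact hj' q hq hqW
  obtain ⟨ω, hω⟩ := lll_count B N F D₀ p x hx0 hx1 hp0 hpx hΩ hD hP hind
  refine ⟨fun v => if h : v ∈ W then ω ⟨v, h⟩ else ⟨0, by omega⟩, ?_⟩
  intro C hC
  have hnB := hω C hC
  rw [hBmem] at hnB
  push_neg at hnB
  obtain ⟨q, hq, h1, h2⟩ := hnB
  refine ⟨q, hq, ?_⟩
  simp only [dif_pos h1]
  exact h2
end

section
/- Let F be an ℓ-disjoint (k,d)-CSP, and call a variable x frequent if deg(x,F) > d^k/(e·d^{ℓ-1}·k). If the number of frequent variables is at most (d^k/(e·d^{ℓ-1}·k))^{1/(ℓ-1)}, then F is satisfiable. -/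
/-!
Truncate every constraint by deleting `ℓ - 1` of its variables, deleting frequent variables
first. The result is a `(k - ℓ + 1, d)`-CSP whose solutions solve `F`. An infrequent variable
keeps degree at most `t = d^k / (e d^(ℓ-1) k) = d^(k-ℓ+1) / (e k)`. A frequent variable `x`
survives only in constraints with at least `ℓ` frequent variables; assigning to each of them
`ℓ - 1` further frequent variables is injective by `ℓ`-disjointness, so the degree of `x` is at
most `|S|^(ℓ-1) ≤ t`. So the truncated CSP meets the degree condition of the local lemma,
which holds by counting: among the assignments satisfying a set `T` of constraints, a fraction
at most `x = 1/(M+2)` violates a further constraint, where `M` bounds the number of neighbours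
of a constraint.
-/

open Finset

section CountingLocalLemma

variable {Ω ι : Type*} (Ω₀ : Finset Ω) (bad : ι → Ω → Prop)
  [∀ i, DecidablePred (bad i)]

def avoiding (T : Finset ι) : Finset Ω := {ω ∈ Ω₀ | ∀ i ∈ T, ¬ bad i ω}

variable {Ω₀ bad}

lemma avoiding_anti {T T' : Finset ι} (h : T ⊆ T') : avoiding Ω₀ bad T' ⊆ avoiding Ω₀ bad T :=
  fun _ hω => mem_filter.mpr ⟨(mem_filter.mp hω).1, fun i hi => (mem_filter.mp hω).2 i (h hi)⟩

@[simp] lemma avoiding_empty : avoiding Ω₀ bad ∅ = Ω₀ := by simp [avoiding]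

variable [DecidableEq ι]

lemma card_avoiding_insert (i : ι) (T : Finset ι) :
    #(avoiding Ω₀ bad (insert i T)) + #{ω ∈ avoiding Ω₀ bad T | bad i ω} =
      #(avoiding Ω₀ bad T) := by
  rw [add_comm, ← card_filter_add_card_filter_not (s := avoiding Ω₀ bad T) (bad i)]
  congr 2
  ext ω
  simp only [avoiding, mem_filter, forall_mem_insert]
  tauto

variable {G : Finset ι} {x : ℝ}

lemma pow_mul_card_avoiding_le {n : ℕ} (hx : 0 ≤ 1 - x)
    (hstep : ∀ T ⊆ G, ∀ i ∈ G, i ∉ T → #T < n →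
      (1 - x) * #(avoiding Ω₀ bad T) ≤ #(avoiding Ω₀ bad (insert i T)))
    {U D : Finset ι} (hUD : Disjoint U D) (hG : U ∪ D ⊆ G) (hn : #(U ∪ D) ≤ n) :
    (1 - x) ^ #D * #(avoiding Ω₀ bad U) ≤ #(avoiding Ω₀ bad (U ∪ D)) := by
  induction D using Finset.induction_on with
  | empty => simp
  | insert j D hj ih =>
    have hjUD : j ∉ U ∪ D := by
      simp [hj, disjoint_right.mp hUD (mem_insert_self j D)]
    rw [union_insert] at hG hn ⊢
    have hG' : U ∪ D ⊆ G := (subset_insert _ _).trans hG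
    have hlt : #(U ∪ D) < n := (card_lt_card (ssubset_insert hjUD)).trans_le hn
    calc (1 - x) ^ #(insert j D) * #(avoiding Ω₀ bad U)
        = (1 - x) * ((1 - x) ^ #D * #(avoiding Ω₀ bad U)) := by
          rw [card_insert_of_notMem hj, pow_succ]; ring
      _ ≤ (1 - x) * #(avoiding Ω₀ bad (U ∪ D)) := by
          gcongr; exact ih (hUD.mono_right (subset_insert j D)) hG' hlt.le
      _ ≤ #(avoiding Ω₀ bad (insert j (U ∪ D))) :=
          hstep _ hG' j (hG (mem_insert_self _ _)) hjUD hlt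

variable (dep : ι → ι → Prop) [DecidableRel dep] {M : ℕ} {p : ℝ}

theorem one_sub_mul_card_avoiding_le (hx0 : 0 ≤ x) (hx1 : x ≤ 1) (hp : p ≤ x * (1 - x) ^ M)
    (hdep : ∀ i ∈ G, #{j ∈ G.erase i | dep i j} ≤ M)
    (hind : ∀ i ∈ G, ∀ U ⊆ G, (∀ j ∈ U, ¬ dep i j) →
      (#{ω ∈ avoiding Ω₀ bad U | bad i ω} : ℝ) ≤ p * #(avoiding Ω₀ bad U))
    {T : Finset ι} (hT : T ⊆ G) {i : ι} (hi : i ∈ G) (hiT : i ∉ T) :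
    (1 - x) * #(avoiding Ω₀ bad T) ≤ #(avoiding Ω₀ bad (insert i T)) := by
  induction hn : #T using Nat.strong_induction_on generalizing T i with
  | _ n ih =>
  set U := {j ∈ T | ¬ dep i j}
  set D := {j ∈ T | dep i j}
  have hUD : U ∪ D = T := by rw [union_comm]; exact filter_union_filter_not_eq _ _
  have hchain : (1 - x) ^ #D * #(avoiding Ω₀ bad U) ≤ #(avoiding Ω₀ bad T) := by
    have := pow_mul_card_avoiding_le (n := n) (by linarith)
      (fun T' hT' i' hi' hi'T' hlt => ih _ hlt hT' hi' hi'T' rfl)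
      (disjoint_filter_filter_not _ _ _).symm (hUD.symm ▸ hT) (by rw [hUD, hn])
    rwa [hUD] at this
  have hD : #D ≤ M := (hdep i hi).trans' <| card_le_card fun j hj => by
    have := mem_filter.mp hj
    exact mem_filter.mpr ⟨mem_erase.mpr ⟨fun h => hiT (h ▸ this.1), hT this.1⟩, this.2⟩
  -- bound the violations of `i` inside the larger set `avoiding U`, where `hind` applies, and
  -- pay a factor `1 - x` for each of the at most `M` members of `D`
  have hbad : (#{ω ∈ avoiding Ω₀ bad T | bad i ω} : ℝ) ≤ x * #(avoiding Ω₀ bad T) :=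
    calc (#{ω ∈ avoiding Ω₀ bad T | bad i ω} : ℝ)
        ≤ #{ω ∈ avoiding Ω₀ bad U | bad i ω} := by
          gcongr; exact avoiding_anti (filter_subset _ _)
      _ ≤ p * #(avoiding Ω₀ bad U) :=
          hind i hi U ((filter_subset _ _).trans hT) fun j hj => (mem_filter.mp hj).2
      _ ≤ x * (1 - x) ^ #D * #(avoiding Ω₀ bad U) := by
          gcongr
          exact hp.trans <| mul_le_mul_of_nonneg_left
            (pow_le_pow_of_le_one (by linarith) (by linarith) hD) hx0
      _ ≤ x * #(avoiding Ω₀ bad T) := by rw [mul_assoc]; gcongr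
  have hsplit := card_avoiding_insert (Ω₀ := Ω₀) (bad := bad) i T
  rw [← Nat.cast_inj (R := ℝ), Nat.cast_add] at hsplit
  linarith

theorem avoiding_nonempty (hΩ₀ : Ω₀.Nonempty) (hx0 : 0 ≤ x) (hx1 : x < 1)
    (hp : p ≤ x * (1 - x) ^ M) (hdep : ∀ i ∈ G, #{j ∈ G.erase i | dep i j} ≤ M)
    (hind : ∀ i ∈ G, ∀ U ⊆ G, (∀ j ∈ U, ¬ dep i j) →
      (#{ω ∈ avoiding Ω₀ bad U | bad i ω} : ℝ) ≤ p * #(avoiding Ω₀ bad U)) :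
    (avoiding Ω₀ bad G).Nonempty := by
  have hchain := pow_mul_card_avoiding_le (Ω₀ := Ω₀) (bad := bad) (n := #G) (by linarith)
    (fun _ hT _ hi hiT _ => one_sub_mul_card_avoiding_le dep hx0 hx1.le hp hdep hind hT hi hiT)
    (disjoint_empty_left G) (by simp) (by simp)
  rw [empty_union, avoiding_empty] at hchain
  have : (0 : ℝ) < (1 - x) ^ #G * #Ω₀ := by
    have := hΩ₀.card_pos; have : 0 < 1 - x := by linarith
    positivity
  exact card_pos.mp (by exact_mod_cast this.trans_le hchain)

end CountingLocalLemma

lemma inv_exp_mul_le_inv_mul_one_sub_inv_pow (m : ℕ) :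
    (Real.exp 1 * (m + 1))⁻¹ ≤ ((m : ℝ) + 2)⁻¹ * (1 - ((m : ℝ) + 2)⁻¹) ^ m := by
  have ha : 1 - ((m : ℝ) + 2)⁻¹ = (1 + ((m + 1 : ℕ) : ℝ)⁻¹)⁻¹ := by
    push_cast; field_simp; ring
  have hb : ((m : ℝ) + 2)⁻¹ = ((m : ℝ) + 1)⁻¹ * (1 + ((m + 1 : ℕ) : ℝ)⁻¹)⁻¹ := by
    push_cast; field_simp; ring
  rw [ha, hb, mul_assoc, ← pow_succ', inv_pow, mul_inv, mul_comm]
  gcongr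
  exact Real.one_add_inv_pow_le_exp

lemma pow_sub_one_le_of_le_rpow_inv {x y : ℝ} (hx : 0 ≤ x) (hy : 0 ≤ y) {n : ℕ} (hn : 2 ≤ n)
    (h : x ≤ y ^ ((n : ℝ) - 1)⁻¹) : x ^ (n - 1) ≤ y := by
  have hn' : ((n - 1 : ℕ) : ℝ) = n - 1 := by rw [Nat.cast_sub (by omega)]; simp
  have hn1 : (0 : ℝ) < (n - 1 : ℕ) := by exact_mod_cast (by omega : 0 < n - 1)
  rw [← hn', Real.le_rpow_inv_iff_of_pos hx hy hn1] at h
  exact_mod_cast h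

lemma pow_div_mul_pow_mul_le {a c : ℝ} (ha : 0 < a) (hc : 0 < c) {j k : ℕ} (hjk : j < k) :
    a ^ k / (c * a ^ j * k) ≤ a ^ (k - j) / (c * (k - j : ℕ)) := by
  have hkj : (0 : ℝ) < (k - j : ℕ) := by exact_mod_cast Nat.sub_pos_of_lt hjk
  rw [show a ^ k / (c * a ^ j * k) = a ^ (k - j) / (c * k) by
    rw [pow_sub₀ _ ha.ne' hjk.le]; field_simp]
  gcongr
  exact_mod_cast Nat.sub_le k j

lemma card_filter_le_card_pow_of_card_inter_lt {V ι : Type*} [DecidableEq V] (A : ι → Finset V)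
    {F : Finset ι} {ℓ : ℕ} (hF : ∀ i ∈ F, ∀ j ∈ F, i ≠ j → #(A i ∩ A j) < ℓ) (S : Finset V) (x : V) :
    #{i ∈ F | x ∈ A i ∧ ℓ ≤ #(A i ∩ S)} ≤ #S ^ (ℓ - 1) := by
  have hB : ∀ i ∈ {i ∈ F | x ∈ A i ∧ ℓ ≤ #(A i ∩ S)}, ∃ B ⊆ (A i ∩ S).erase x, #B = ℓ - 1 :=
    fun i hi => exists_subset_card_eq
      ((Nat.sub_le_sub_right (mem_filter.mp hi).2.2 1).trans pred_card_le_card_erase)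
  choose! B hBsub hBcard using hB
  -- two members sharing `B` would share the `ℓ` points of `insert x B`
  have hBinj : Set.InjOn B ({i ∈ F | x ∈ A i ∧ ℓ ≤ #(A i ∩ S)} : Finset ι) := by
    intro i hi j hj hij
    by_contra hne
    rw [mem_coe] at hi hj
    have hsub : insert x (B i) ⊆ A i ∩ A j := by
      refine insert_subset (mem_inter.mpr ⟨(mem_filter.mp hi).2.1, (mem_filter.mp hj).2.1⟩)
        fun y hy => mem_inter.mpr ?_
      exact ⟨(mem_inter.mp (mem_of_mem_erase (hBsub i hi hy))).1,
        (mem_inter.mp (mem_of_mem_erase (hBsub j hj (hij ▸ hy)))).1⟩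
    have hx : x ∉ B i := fun h => notMem_erase x _ (hBsub i hi h)
    have := card_le_card hsub
    rw [card_insert_of_notMem hx, hBcard i hi] at this
    exact absurd (hF i (mem_filter.mp hi).1 j (mem_filter.mp hj).1 hne) (by omega)
  calc #{i ∈ F | x ∈ A i ∧ ℓ ≤ #(A i ∩ S)} ≤ #(S.powersetCard (ℓ - 1)) :=
        card_le_card_of_injOn B (fun i hi => mem_powersetCard.mpr
          ⟨(hBsub i hi).trans ((erase_subset _ _).trans inter_subset_right), hBcard i hi⟩) hBinj
    _ = (#S).choose (ℓ - 1) := card_powersetCard _ _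
    _ ≤ #S ^ (ℓ - 1) := Nat.choose_le_pow _ _

section CSP

variable {V β : Type*} [DecidableEq V] {d : ℕ}

abbrev vars (C : Finset (V × Fin d)) : Finset V := C.image Prod.fst

abbrev Violates (C : Finset (V × Fin d)) (α : V → Fin d) : Prop := ∀ q ∈ C, α q.1 = q.2

lemma finite_setOf_support_subset [Zero β] [Finite β] (W : Finset V) :
    {α : V → β | Function.support α ⊆ W}.Finite := by
  refine Set.Finite.of_finite_image (f := fun α (w : W) => α w) (Set.toFinite _) ?_
  intro α hα α' hα' h
  funext x
  by_cases hx : x ∈ W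
  · exact congrFun h ⟨x, hx⟩
  · rw [Function.notMem_support.mp fun h => hx (hα h),
      Function.notMem_support.mp fun h => hx (hα' h)]

/-- Restricting to assignments supported on the variables in use keeps the sample space finite
even when `V` is infinite. -/
noncomputable def supportedIn [Zero β] [Finite β] (W : Finset V) : Finset (V → β) :=
  (finite_setOf_support_subset W).toFinset

lemma mem_supportedIn [Zero β] [Finite β] {W : Finset V} {α : V → β} :
    α ∈ supportedIn W ↔ Function.support α ⊆ W :=
  Set.Finite.mem_toFinset _

def resample (s : Finset V) (α : V → β) (g : s → β) : V → β :=
  fun x => if h : x ∈ s then g ⟨x, h⟩ else α x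

lemma card_filter_violated_mul_pow_le (C : Finset (V × Fin d)) (Ω' : Finset (V → Fin d))
    (hΩ' : ∀ α ∈ Ω', ∀ g, resample (vars C) α g ∈ Ω') :
    #{α ∈ Ω' | Violates C α} * d ^ #(vars C) ≤ #Ω' := by
  have hcard : #(univ : Finset (vars C → Fin d)) = d ^ #(vars C) := by simp
  rw [← hcard, ← card_product]
  refine card_le_card_of_injOn (fun q => resample (vars C) q.1 q.2)
    (fun q hq => hΩ' _ (mem_filter.mp (mem_product.mp hq).1).1 _) ?_
  -- a violator of `C` is determined by its values off `vars C`
  rintro ⟨α, g⟩ hq ⟨α', g'⟩ hq' h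
  simp only [coe_product, Set.mem_prod, mem_coe, mem_filter] at hq hq' h
  have hg : g = g' := funext fun ⟨y, hy⟩ => by simpa [resample, hy] using congrFun h y
  have hα : α = α' := funext fun y => by
    by_cases hy : y ∈ vars C
    · obtain ⟨q, hqC, rfl⟩ := mem_image.mp hy
      rw [hq.1.2 q hqC, hq'.1.2 q hqC]
    · simpa [resample, hy] using congrFun h y
  rw [hα, hg]

lemma resample_mem_avoiding [NeZero d] {W : Finset V} {C : Finset (V × Fin d)}
    (hCW : vars C ⊆ W) {U : Finset (Finset (V × Fin d))}
    (hU : ∀ D ∈ U, Disjoint (vars C) (vars D)) {α : V → Fin d}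
    (hα : α ∈ avoiding (supportedIn W) Violates U) (g : vars C → Fin d) :
    resample (vars C) α g ∈ avoiding (supportedIn W) Violates U := by
  simp only [avoiding, mem_filter, mem_supportedIn] at hα ⊢
  refine ⟨fun x hx => ?_, fun D hD hviol => hα.2 D hD fun q hq => ?_⟩
  · by_cases h : x ∈ vars C
    · exact hCW h
    · simp only [Function.mem_support, resample, h, dite_false] at hx
      exact hα.1 hx
  · have : q.1 ∉ vars C := disjoint_right.mp (hU D hD) (mem_image_of_mem _ hq)
    simpa [resample, this] using hviol q hq

lemma card_filter_not_disjoint_le_sum {ι : Type*} [DecidableEq ι] (G : Finset ι) (f : ι → Finset V)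
    (s : Finset V) : #{i ∈ G | ¬ Disjoint s (f i)} ≤ ∑ x ∈ s, #{i ∈ G | x ∈ f i} := by
  refine (card_le_card fun i hi => ?_).trans card_biUnion_le
  obtain ⟨hiG, hi⟩ := mem_filter.mp hi
  obtain ⟨x, hxs, hxi⟩ := not_disjoint_iff.mp hi
  exact mem_biUnion.mpr ⟨x, hxs, mem_filter.mpr ⟨hiG, hxi⟩⟩

lemma exp_mul_card_filter_not_disjoint_le {k : ℕ} (hk : k ≠ 0)
    {G : Finset (Finset (V × Fin d))}
    (hdeg : ∀ x, (#{C ∈ G | x ∈ vars C} : ℝ) ≤ d ^ k / (Real.exp 1 * k))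
    {C : Finset (V × Fin d)} (hC : #(vars C) = k) :
    Real.exp 1 * #{D ∈ G | ¬ Disjoint (vars C) (vars D)} ≤ d ^ k := by
  have hsum : (#{D ∈ G | ¬ Disjoint (vars C) (vars D)} : ℝ) ≤ k * (d ^ k / (Real.exp 1 * k)) :=
    calc (#{D ∈ G | ¬ Disjoint (vars C) (vars D)} : ℝ)
        ≤ ∑ x ∈ vars C, (#{D ∈ G | x ∈ vars D} : ℝ) := by
          exact_mod_cast card_filter_not_disjoint_le_sum G vars (vars C)
      _ ≤ k * (d ^ k / (Real.exp 1 * k)) := by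
          have := sum_le_card_nsmul (vars C) (fun x => (#{D ∈ G | x ∈ vars D} : ℝ)) _
            fun x _ => hdeg x
          rwa [nsmul_eq_mul, hC] at this
  have hk' : (0 : ℝ) < k := by positivity
  calc Real.exp 1 * #{D ∈ G | ¬ Disjoint (vars C) (vars D)}
      ≤ Real.exp 1 * (k * (d ^ k / (Real.exp 1 * k))) := by gcongr
    _ = d ^ k := by field_simp

theorem exists_satisfying_of_degree_le [NeZero d] {k : ℕ} (hk : k ≠ 0)
    (G : Finset (Finset (V × Fin d))) (hG : ∀ C ∈ G, #(vars C) = k)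
    (hdeg : ∀ x, (#{C ∈ G | x ∈ vars C} : ℝ) ≤ d ^ k / (Real.exp 1 * k)) :
    ∃ α : V → Fin d, ∀ C ∈ G, ∃ q ∈ C, α q.1 ≠ q.2 := by
  obtain rfl | hGne := G.eq_empty_or_nonempty
  · exact ⟨0, by simp⟩
  let dep (C D : Finset (V × Fin d)) : Prop := ¬ Disjoint (vars C) (vars D)
  set M := G.sup fun C => #{D ∈ G.erase C | dep C D}
  have hM : Real.exp 1 * (M + 1) ≤ d ^ k := by
    obtain ⟨C, hC, hCM⟩ : ∃ C ∈ G, M = #{D ∈ G.erase C | dep C D} :=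
      exists_mem_eq_sup G hGne _
    have hCC : dep C C := fun h => (card_pos.mp ((hG C hC).symm ▸ Nat.pos_of_ne_zero hk)).ne_empty
      (disjoint_self_iff_empty _ |>.mp h)
    have hself : #{D ∈ G.erase C | dep C D} + 1 = #{D ∈ G | dep C D} := by
      rw [filter_erase, card_erase_add_one (mem_filter.mpr ⟨hC, hCC⟩)]
    have := exp_mul_card_filter_not_disjoint_le hk hdeg (hG C hC)
    rw [hCM]; exact_mod_cast hself ▸ this
  have hd : (0 : ℝ) < d := by exact_mod_cast Nat.pos_of_neZero d
  -- `x = 1/(M+2)` rather than `1/(M+1)` keeps `x < 1` when `M = 0`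
  have hp : ((d : ℝ) ^ k)⁻¹ ≤ ((M : ℝ) + 2)⁻¹ * (1 - ((M : ℝ) + 2)⁻¹) ^ M :=
    (inv_anti₀ (by positivity) hM).trans (inv_exp_mul_le_inv_mul_one_sub_inv_pow M)
  have hind : ∀ C ∈ G, ∀ U ⊆ G, (∀ D ∈ U, ¬ dep C D) →
      (#{α ∈ avoiding (supportedIn (G.sup vars)) Violates U | Violates C α} : ℝ) ≤
        ((d : ℝ) ^ k)⁻¹ * #(avoiding (supportedIn (G.sup vars)) Violates U) := by
    intro C hC U _ hU
    have := card_filter_violated_mul_pow_le C _ fun α hα =>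
      resample_mem_avoiding (le_sup (f := vars) hC) (fun D hD => not_not.mp (hU D hD)) hα
    rw [hG C hC] at this
    rw [inv_mul_eq_div, le_div_iff₀ (by positivity)]
    exact_mod_cast this
  obtain ⟨α, hα⟩ := avoiding_nonempty dep (Ω₀ := supportedIn (G.sup vars))
    ⟨0, mem_supportedIn.mpr (by simp)⟩ (by positivity) (inv_lt_one_of_one_lt₀ (by linarith))
    hp (fun C hC => le_sup (f := fun C => #{D ∈ G.erase C | dep C D}) hC) hind
  refine ⟨α, fun C hC => ?_⟩
  simpa [Violates] using (mem_filter.mp hα).2 C hC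

/-- Delete `j` variables of `C`, all of its variables in `S` among them unless there are more
than `j` of those. -/
lemma exists_subset_card_vars_eq_sub (C : Finset (V × Fin d)) (hC : #(vars C) = #C)
    (S : Finset V) {j : ℕ} (hj : j ≤ #C) :
    ∃ E ⊆ C, #(vars E) = #C - j ∧ ∀ x ∈ vars E, x ∈ S → j < #(vars C ∩ S) := by
  have hinj : Set.InjOn Prod.fst (C : Set (V × Fin d)) := card_image_iff.mp hC
  suffices ∃ E ⊆ C, #E = #C - j ∧ ∀ x ∈ vars E, x ∈ S → j < #(vars C ∩ S) by
    obtain ⟨E, hEC, hE, hES⟩ := this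
    exact ⟨E, hEC, (card_image_of_injOn (hinj.mono (coe_subset.mpr hEC))).trans hE, hES⟩
  by_cases h : j < #(vars C ∩ S)
  · obtain ⟨E, hEC, hE⟩ := exists_subset_card_eq (s := C) (Nat.sub_le #C j)
    exact ⟨E, hEC, hE, fun _ _ _ => h⟩
  · have hfreq : #{q ∈ C | q.1 ∈ S} ≤ j := by
      rw [← card_image_of_injOn (hinj.mono (coe_subset.mpr (filter_subset _ C)))]
      refine (card_le_card fun y hy => ?_).trans (not_lt.mp h)
      obtain ⟨q, hq, rfl⟩ := mem_image.mp hy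
      exact mem_inter.mpr ⟨mem_image_of_mem _ (mem_filter.mp hq).1, (mem_filter.mp hq).2⟩
    have hsplit := card_filter_add_card_filter_not (s := C) (fun q => q.1 ∈ S)
    obtain ⟨E, hEC, hE⟩ := exists_subset_card_eq (s := {q ∈ C | q.1 ∉ S}) (n := #C - j)
      (by omega)
    refine ⟨E, hEC.trans (filter_subset _ C), hE, fun x hx hxS => absurd hxS ?_⟩
    obtain ⟨q, hq, rfl⟩ := mem_image.mp hx
    exact (mem_filter.mp (hEC hq)).2

lemma card_filter_image_le_card_filter {F : Finset (Finset (V × Fin d))}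
    {τ : Finset (V × Fin d) → Finset (V × Fin d)} (hτC : ∀ C ∈ F, τ C ⊆ C) (x : V) :
    #{E ∈ F.image τ | x ∈ vars E} ≤ #{C ∈ F | x ∈ vars C} := by
  rw [filter_image]
  exact card_image_le.trans <| card_le_card <|
    monotone_filter_right F fun C hC h => image_subset_image (hτC C hC) h

lemma card_filter_image_le_card_pow {F : Finset (Finset (V × Fin d))} {ℓ : ℕ}
    (hF : ∀ C ∈ F, ∀ D ∈ F, C ≠ D → #(vars C ∩ vars D) < ℓ) {S : Finset V}
    {τ : Finset (V × Fin d) → Finset (V × Fin d)} (hτC : ∀ C ∈ F, τ C ⊆ C)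
    (hτS : ∀ C ∈ F, ∀ x ∈ vars (τ C), x ∈ S → ℓ - 1 < #(vars C ∩ S)) {x : V} (hx : x ∈ S) :
    #{E ∈ F.image τ | x ∈ vars E} ≤ #S ^ (ℓ - 1) := by
  rw [filter_image]
  refine card_image_le.trans <| (card_le_card fun C hC => ?_).trans
    (card_filter_le_card_pow_of_card_inter_lt vars hF S x)
  obtain ⟨hCF, hxC⟩ := mem_filter.mp hC
  exact mem_filter.mpr ⟨hCF, image_subset_image (hτC C hCF) hxC,
    Nat.le_of_pred_lt (hτS C hCF x hxC hx)⟩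

end CSP

/-- An ℓ-disjoint (k,d)-CSP with at most (d^k/(e·d^{ℓ-1}·k))^{1/(ℓ-1)} frequent
variables is satisfiable, where x is frequent if deg(x,F) > d^k/(e·d^{ℓ-1}·k).
The finite set S collects all frequent variables. -/
theorem stmt7 {V : Type*} [DecidableEq V] (k d ℓ : ℕ) (hℓ : 2 ≤ ℓ) (hlk : ℓ ≤ k)
    (hd : 2 ≤ d)
    (F : Finset (Finset (V × Fin d)))
    (hcard : ∀ C ∈ F, C.card = k ∧ (C.image Prod.fst).card = k)
    (hdisj : ∀ C ∈ F, ∀ D ∈ F, C ≠ D → ((C.image Prod.fst) ∩ (D.image Prod.fst)).card < ℓ)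
    (S : Finset V)
    (hS : ∀ x : V,
      (d : ℝ) ^ k / (Real.exp 1 * (d : ℝ) ^ (ℓ - 1) * k)
        < ((F.filter (fun C => x ∈ C.image Prod.fst)).card : ℝ) → x ∈ S)
    (hScard : (S.card : ℝ)
      ≤ ((d : ℝ) ^ k / (Real.exp 1 * (d : ℝ) ^ (ℓ - 1) * k)) ^ (((ℓ : ℝ) - 1)⁻¹)) :
    ∃ α : V → Fin d, ∀ C ∈ F, ∃ p ∈ C, α p.1 ≠ p.2 := by
  have : NeZero d := ⟨by omega⟩
  have hdR : (0 : ℝ) < d := by exact_mod_cast (by omega : 0 < d)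
  set t := (d : ℝ) ^ k / (Real.exp 1 * (d : ℝ) ^ (ℓ - 1) * k)
  have hSt : (#S : ℝ) ^ (ℓ - 1) ≤ t :=
    pow_sub_one_le_of_le_rpow_inv (by positivity) (by positivity) hℓ hScard
  choose! τ hτC hτcard hτS using fun C hC =>
    exists_subset_card_vars_eq_sub C ((hcard C hC).2.trans (hcard C hC).1.symm) S
      (j := ℓ - 1) (by have := (hcard C hC).1; omega)
  have hdeg : ∀ x, (#{E ∈ F.image τ | x ∈ vars E} : ℝ) ≤ t := by
    intro x
    by_cases hx : x ∈ S
    · exact le_trans (by exact_mod_cast card_filter_image_le_card_pow hdisj hτC hτS hx) hSt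
    · exact le_trans (by exact_mod_cast card_filter_image_le_card_filter hτC x)
        (not_lt.mp (mt (hS x) hx))
  obtain ⟨α, hα⟩ := exists_satisfying_of_degree_le (k := k - (ℓ - 1)) (by omega) (F.image τ)
    (fun E hE => by
      obtain ⟨C, hC, rfl⟩ := mem_image.mp hE
      rw [hτcard C hC, (hcard C hC).1])
    fun x => (hdeg x).trans (pow_div_mul_pow_mul_le hdR (Real.exp_pos 1) (by omega))
  exact ⟨α, fun C hC => (hα _ (mem_image_of_mem τ hC)).imp fun q hq => ⟨hτC C hC hq.1, hq.2⟩⟩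
end

section
/- For every k ≥ 2 and ℓ with 2 ≤ ℓ ≤ k and d ≥ 2, there exists an unsatisfiable ℓ-disjoint (k,d)-CSP with at most c·(e·k²·ℓ^{-1}·ln(d)·d^k)^{1+1/(ℓ-1)} constraints, for some absolute constant c > 0. -/
/-!
On `n = k (u + 1)` variables, a maximal family of `k`-sets pairwise meeting in fewer than `ℓ`
points has at least `u ^ ℓ / C(k, ℓ)` members: every `k`-set meets a member in `ℓ` points, and a
member blocks at most `C(k, ℓ) C(n, k - ℓ) ≤ C(n, k) / u ^ ℓ` of them. Forbid a uniformly random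
pattern on each of `m ≈ d ^ k n log d` members; a fixed assignment satisfies all of them with
probability `(1 - d⁻ᵏ) ^ m < d⁻ⁿ`, so by the first moment some choice of patterns is unsatisfiable.
Taking `u ^ (ℓ - 1) ≈ k log d d ^ k C(k, ℓ)` and `C(k, ℓ) ≤ (e k / ℓ) ^ ℓ` gives the bound.
-/

open Finset Real

section Packing

variable {α : Type*} [DecidableEq α]

theorem card_filter_le_card_inter_le {U s : Finset α} (hsU : s ⊆ U) {k : ℕ} (hs : #s = k)
    (ℓ : ℕ) : #{t ∈ U.powersetCard k | ℓ ≤ #(t ∩ s)} ≤ k.choose ℓ * (#U).choose (k - ℓ) := by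
  have hcover : {t ∈ U.powersetCard k | ℓ ≤ #(t ∩ s)} ⊆
      (s.powersetCard ℓ).biUnion fun L => {t ∈ U.powersetCard k | L ⊆ t} := by
    intro t ht
    obtain ⟨htU, hℓ⟩ := mem_filter.1 ht
    obtain ⟨L, hL, hLcard⟩ := exists_subset_card_eq hℓ
    exact mem_biUnion.2 ⟨L, mem_powersetCard.2 ⟨hL.trans inter_subset_right, hLcard⟩,
      mem_filter.2 ⟨htU, hL.trans inter_subset_left⟩⟩
  calc #{t ∈ U.powersetCard k | ℓ ≤ #(t ∩ s)}
      ≤ ∑ L ∈ s.powersetCard ℓ, #{t ∈ U.powersetCard k | L ⊆ t} :=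
        (card_le_card hcover).trans card_biUnion_le
    _ ≤ ∑ L ∈ s.powersetCard ℓ, (#U).choose (k - ℓ) := by
        refine sum_le_sum fun L hL => ?_
        obtain ⟨hLs, rfl⟩ := mem_powersetCard.1 hL
        rw [card_filter_powersetCard_subset L U k (hLs.trans hsU) (hs ▸ card_le_card hLs)]
        exact Nat.choose_le_choose _ (Nat.sub_le _ _)
    _ = k.choose ℓ * (#U).choose (k - ℓ) := by rw [sum_const, card_powersetCard, hs, smul_eq_mul]

theorem exists_packing (U : Finset α) {k ℓ : ℕ} (hℓk : ℓ ≤ k) :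
    ∃ S ⊆ U.powersetCard k, (S : Set (Finset α)).Pairwise (fun s t => #(s ∩ t) < ℓ) ∧
      (#U).choose k ≤ #S * (k.choose ℓ * (#U).choose (k - ℓ)) := by
  classical
  obtain ⟨S, hS, hmax⟩ := ((U.powersetCard k).powerset.filter fun S : Finset (Finset α) =>
      (S : Set (Finset α)).Pairwise fun s t => #(s ∩ t) < ℓ).exists_max_image card
    ⟨∅, by simp⟩
  obtain ⟨hSU, hSdisj⟩ := mem_filter.1 hS
  rw [mem_powerset] at hSU
  have hcover : U.powersetCard k ⊆ S.biUnion fun s => {t ∈ U.powersetCard k | ℓ ≤ #(t ∩ s)} := by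
    intro t ht
    by_contra hnot
    simp only [mem_biUnion, mem_filter, ht, true_and, not_exists, not_and, not_le] at hnot
    have htS : t ∉ S := fun htS => (hnot t htS).not_ge <| by
      rw [inter_self, (mem_powersetCard.1 ht).2]; exact hℓk
    have hins := hmax (insert t S) <| mem_filter.2 ⟨mem_powerset.2 (insert_subset ht hSU), by
      rw [coe_insert]
      exact hSdisj.insert fun s hs _ => ⟨hnot s hs, inter_comm t s ▸ hnot s hs⟩⟩
    rw [card_insert_of_notMem htS] at hins
    omega
  refine ⟨S, hSU, hSdisj, ?_⟩
  calc (#U).choose k = #(U.powersetCard k) := (card_powersetCard _ _).symm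
    _ ≤ ∑ s ∈ S, #{t ∈ U.powersetCard k | ℓ ≤ #(t ∩ s)} :=
        (card_le_card hcover).trans card_biUnion_le
    _ ≤ ∑ s ∈ S, k.choose ℓ * (#U).choose (k - ℓ) := sum_le_sum fun s hs =>
        have hs' := mem_powersetCard.1 (hSU hs)
        card_filter_le_card_inter_le hs'.1 hs'.2 ℓ
    _ = #S * (k.choose ℓ * (#U).choose (k - ℓ)) := by rw [sum_const, smul_eq_mul]

end Packing

theorem Nat.mul_choose_le_choose_succ {n j u : ℕ} (h : u * (j + 1) ≤ n - j) :
    u * n.choose j ≤ n.choose (j + 1) := by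
  refine Nat.le_of_mul_le_mul_right ?_ j.succ_pos
  calc u * n.choose j * (j + 1) = u * (j + 1) * n.choose j := by ring
    _ ≤ (n - j) * n.choose j := Nat.mul_le_mul_right _ h
    _ = n.choose (j + 1) * (j + 1) := by rw [Nat.choose_succ_right_eq, mul_comm]

theorem Nat.pow_mul_choose_sub_le_choose {n k u : ℕ} (h : k * (u + 1) ≤ n) :
    ∀ {ℓ : ℕ}, ℓ ≤ k → u ^ ℓ * n.choose (k - ℓ) ≤ n.choose k
  | 0, _ => by simp
  | ℓ + 1, hℓ => by
    have hstep : u * n.choose (k - (ℓ + 1)) ≤ n.choose (k - (ℓ + 1) + 1) :=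
      Nat.mul_choose_le_choose_succ <| by
        have : u * (k - (ℓ + 1) + 1) ≤ u * k := Nat.mul_le_mul_left u (by omega)
        rw [mul_add, mul_one, mul_comm] at h
        omega
    calc u ^ (ℓ + 1) * n.choose (k - (ℓ + 1)) = u ^ ℓ * (u * n.choose (k - (ℓ + 1))) := by ring
      _ ≤ u ^ ℓ * n.choose (k - ℓ) := by
        rw [show k - ℓ = k - (ℓ + 1) + 1 by omega]
        exact Nat.mul_le_mul_left _ hstep
      _ ≤ n.choose k := Nat.pow_mul_choose_sub_le_choose h (by omega)

theorem exists_forced_patterns {V β : Type*} [Fintype V] [Fintype β] [Nonempty β]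
    (S : Finset (Finset V))
    (h : Fintype.card β ^ Fintype.card V * ∏ s ∈ S, (Fintype.card β ^ #s - 1) <
      ∏ s ∈ S, Fintype.card β ^ #s) :
    ∃ c : Finset V → V → β, ∀ α : V → β, ∃ s ∈ S, ∀ x ∈ s, c s x = α x := by
  classical
  suffices ∃ c : ∀ s : S, s.1 → β, ∀ α : V → β, ∃ s : S, c s = fun x : s.1 => α x by
    obtain ⟨c, hc⟩ := this
    refine ⟨fun s x => if h : s ∈ S ∧ x ∈ s then c ⟨s, h.1⟩ ⟨x, h.2⟩
      else Classical.arbitrary β, fun α => ?_⟩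
    obtain ⟨⟨s, hs⟩, hcs⟩ := hc α
    exact ⟨s, hs, fun x hx => by simp only [dif_pos (And.intro hs hx)]; exact congrFun hcs ⟨x, hx⟩⟩
  by_contra! hno
  have hcover : (univ : Finset (∀ s : S, s.1 → β)) ⊆
      univ.biUnion fun α : V → β => Fintype.piFinset fun s => univ.erase fun x => α x := by
    intro c _
    obtain ⟨α, hα⟩ := hno c
    exact mem_biUnion.2
      ⟨α, mem_univ _, Fintype.mem_piFinset.2 fun s => mem_erase.2 ⟨hα s, mem_univ _⟩⟩
  have hall : Fintype.card (∀ s : S, s.1 → β) = ∏ s ∈ S, Fintype.card β ^ #s := by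
    rw [Fintype.card_pi, ← prod_coe_sort S]
    simp only [Fintype.card_fun, Fintype.card_coe]
  have hbad (α : V → β) : #(Fintype.piFinset fun s : S => univ.erase fun x : s.1 => α x) =
      ∏ s ∈ S, (Fintype.card β ^ #s - 1) := by
    rw [Fintype.card_piFinset, ← prod_coe_sort S]
    simp only [card_erase_of_mem (mem_univ _), card_univ, Fintype.card_fun, Fintype.card_coe]
  refine h.not_ge ?_
  calc ∏ s ∈ S, Fintype.card β ^ #s = #(univ : Finset (∀ s : S, s.1 → β)) := by rw [card_univ, hall]
    _ ≤ ∑ α : V → β, #(Fintype.piFinset fun s : S => univ.erase fun x : s.1 => α x) :=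
        (card_le_card hcover).trans card_biUnion_le
    _ = Fintype.card β ^ Fintype.card V * ∏ s ∈ S, (Fintype.card β ^ #s - 1) := by
        simp only [hbad, sum_const, card_univ, Fintype.card_fun, smul_eq_mul]

theorem mul_sub_one_pow_lt_pow {N D m : ℕ} (hD : 0 < D) (h : (N : ℝ) < exp (m / D)) :
    N * (D - 1) ^ m < D ^ m := by
  have hD' : (0 : ℝ) < D := by exact_mod_cast hD
  have hshrink : (1 - (D : ℝ)⁻¹) ^ m ≤ exp (-(m / D)) := by
    calc (1 - (D : ℝ)⁻¹) ^ m ≤ exp (-(D : ℝ)⁻¹) ^ m :=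
          pow_le_pow_left₀ (sub_nonneg.2 (inv_le_one_of_one_le₀ (by exact_mod_cast hD)))
            (one_sub_le_exp_neg _) m
      _ = exp (-(m / D)) := by rw [← exp_nat_mul]; ring_nf
  have hlt : (N : ℝ) * exp (-(m / D)) < 1 := by
    rwa [exp_neg, ← div_eq_mul_inv, div_lt_one (exp_pos _)]
  suffices (N : ℝ) * ((D : ℝ) - 1) ^ m < (D : ℝ) ^ m by
    rw [← Nat.cast_lt (α := ℝ)]; push_cast [Nat.cast_sub (Nat.one_le_of_lt hD)]; exact this
  calc (N : ℝ) * ((D : ℝ) - 1) ^ m = N * (1 - (D : ℝ)⁻¹) ^ m * (D : ℝ) ^ m := by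
        rw [mul_assoc, ← mul_pow, sub_mul, one_mul, inv_mul_cancel₀ hD'.ne']
    _ ≤ N * exp (-(m / D)) * (D : ℝ) ^ m := by gcongr
    _ < (D : ℝ) ^ m := mul_lt_of_lt_one_left (by positivity) hlt

theorem Nat.choose_le_exp_mul_div_pow (n r : ℕ) : (n.choose r : ℝ) ≤ (exp 1 * n / r) ^ r := by
  rcases r.eq_zero_or_pos with rfl | hr
  · simp
  have hr' : (0 : ℝ) < r := by exact_mod_cast hr
  have hfact : (r : ℝ) ^ r ≤ exp r * r.factorial :=
    (div_le_iff₀ (by positivity)).1 (pow_div_factorial_le_exp _ hr'.le r)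
  calc (n.choose r : ℝ) ≤ (n : ℝ) ^ r / r.factorial := Nat.choose_le_pow_div r n
    _ ≤ exp r * (n : ℝ) ^ r / (r : ℝ) ^ r := by
        rw [div_le_div_iff₀ (by positivity) (by positivity)]
        calc (n : ℝ) ^ r * r ^ r ≤ n ^ r * (exp r * r.factorial) := by gcongr
          _ = exp r * n ^ r * r.factorial := by ring
    _ = (exp 1 * n / r) ^ r := by rw [div_pow, mul_pow, exp_one_pow]

theorem exists_packing_card_eq {k ℓ u m : ℕ} (hℓk : ℓ ≤ k) (hm : m * k.choose ℓ ≤ u ^ ℓ) :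
    ∃ S : Finset (Finset (Fin (k * (u + 1)))), #S = m ∧ (∀ s ∈ S, #s = k) ∧
      (S : Set (Finset (Fin (k * (u + 1))))).Pairwise fun s t => #(s ∩ t) < ℓ := by
  obtain ⟨S, hSk, hS, hcount⟩ := exists_packing (univ : Finset (Fin (k * (u + 1)))) hℓk
  rw [card_univ, Fintype.card_fin] at hcount
  have hpos : 0 < (k * (u + 1)).choose (k - ℓ) :=
    Nat.choose_pos ((Nat.sub_le k ℓ).trans (Nat.le_mul_of_pos_right k u.succ_pos))
  have hmS : m * k.choose ℓ ≤ #S * k.choose ℓ := by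
    refine hm.trans (Nat.le_of_mul_le_mul_right ?_ hpos)
    calc u ^ ℓ * (k * (u + 1)).choose (k - ℓ) ≤ (k * (u + 1)).choose k :=
          Nat.pow_mul_choose_sub_le_choose le_rfl hℓk
      _ ≤ #S * (k.choose ℓ * (k * (u + 1)).choose (k - ℓ)) := hcount
      _ = #S * k.choose ℓ * (k * (u + 1)).choose (k - ℓ) := by ring
  obtain ⟨T, hTS, hT⟩ := exists_subset_card_eq (Nat.le_of_mul_le_mul_right hmS (Nat.choose_pos hℓk))
  exact ⟨T, hT, fun s hs => (mem_powersetCard.1 (hSk (hTS hs))).2, hS.mono (coe_subset.2 hTS)⟩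

theorem exists_csp_of_forced_patterns {V W β : Type*} [DecidableEq V] [DecidableEq W]
    [DecidableEq β] (e : V ↪ W) {k ℓ : ℕ} {S : Finset (Finset V)} (hSk : ∀ s ∈ S, #s = k)
    (hS : (S : Set (Finset V)).Pairwise fun s t => #(s ∩ t) < ℓ)
    {c : Finset V → V → β} (hc : ∀ α : V → β, ∃ s ∈ S, ∀ x ∈ s, c s x = α x) :
    ∃ F : Finset (Finset (W × β)),
      (∀ C ∈ F, C.card = k ∧ (C.image Prod.fst).card = k) ∧
      (∀ C ∈ F, ∀ D ∈ F, C ≠ D → ((C.image Prod.fst) ∩ (D.image Prod.fst)).card < ℓ) ∧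
      (∀ α : W → β, ∃ C ∈ F, ∀ p ∈ C, α p.1 = p.2) ∧ #F ≤ #S := by
  let g (s : Finset V) : Finset (W × β) :=
    s.map ⟨fun x => (e x, c s x), fun _ _ h => e.injective (congrArg Prod.fst h)⟩
  have hfst (s : Finset V) : (g s).image Prod.fst = s.map e := by
    simp only [g, map_eq_image, image_image]; rfl
  refine ⟨S.image g, ?_, ?_, fun α => ?_, card_image_le⟩
  · rintro _ hC
    obtain ⟨s, hs, rfl⟩ := mem_image.1 hC
    rw [hfst, card_map, card_map]
    exact ⟨hSk s hs, hSk s hs⟩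
  · rintro _ hC _ hD hCD
    obtain ⟨s, hs, rfl⟩ := mem_image.1 hC
    obtain ⟨t, ht, rfl⟩ := mem_image.1 hD
    rw [hfst, hfst, ← map_inter, card_map]
    exact hS hs ht fun hst => hCD (hst ▸ rfl)
  · obtain ⟨s, hs, hα⟩ := hc (α ∘ e)
    refine ⟨g s, mem_image_of_mem g hs, fun p hp => ?_⟩
    obtain ⟨x, hx, rfl⟩ := mem_map.1 hp
    exact (hα x hx).symm

theorem inv_two_lt_log_natCast {d : ℕ} (hd : 2 ≤ d) : 2⁻¹ < log d := by
  have : log 2 ≤ log d := log_le_log two_pos (by exact_mod_cast hd)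
  linarith [log_two_gt_d9]

theorem exists_csp_of_pow_ge {k ℓ d u : ℕ} (hk : 0 < k) (hℓk : ℓ ≤ k) (hd : 2 ≤ d) (hu : 0 < u)
    (h : 6 * u * (k * log d * d ^ k) * k.choose ℓ ≤ (u : ℝ) ^ ℓ) :
    ∃ F : Finset (Finset (ℕ × Fin d)),
      (∀ C ∈ F, C.card = k ∧ (C.image Prod.fst).card = k) ∧
      (∀ C ∈ F, ∀ D ∈ F, C ≠ D → ((C.image Prod.fst) ∩ (D.image Prod.fst)).card < ℓ) ∧
      (∀ α : ℕ → Fin d, ∃ C ∈ F, ∀ p ∈ C, α p.1 = p.2) ∧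
      (#F : ℝ) ≤ 6 * u * (k * log d * d ^ k) := by
  have hlog := inv_two_lt_log_natCast hd
  set b := ⌈log d⌉₊
  have hb : (b : ℝ) ≤ 2 * log d := (Nat.ceil_lt_two_mul hlog).le
  have hb0 : 0 < b := Nat.ceil_pos.2 (by linarith)
  set n := k * (u + 1)
  set m := d ^ k * (n * b + 1)
  have hm : (m : ℝ) ≤ 6 * u * (k * log d * d ^ k) := by
    have hkub : n * b + 1 ≤ 3 * (k * u * b) := by
      have h1 : 1 ≤ k * u * b := Nat.one_le_iff_ne_zero.2 (by positivity)
      have h2 : k * b ≤ k * u * b := Nat.mul_le_mul_right b (Nat.le_mul_of_pos_right k hu)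
      have h3 : n * b + 1 = k * u * b + k * b + 1 := by simp only [n]; ring
      omega
    calc (m : ℝ) ≤ d ^ k * (3 * (k * u * b)) := by exact_mod_cast Nat.mul_le_mul_left _ hkub
      _ ≤ d ^ k * (3 * (k * u * (2 * log d))) := by gcongr
      _ = 6 * u * (k * log d * d ^ k) := by ring
  obtain ⟨S, hSm, hSk, hS⟩ := exists_packing_card_eq (m := m) hℓk <| by
    exact_mod_cast (mul_le_mul_of_nonneg_right hm (Nat.cast_nonneg _)).trans h
  have : Nonempty (Fin d) := ⟨⟨0, by omega⟩⟩
  -- `d ≤ e ^ b` makes `d ^ n * (1 - d⁻ᵏ) ^ m ≤ e ^ (n b) * e ^ (-(n b + 1)) < 1`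
  obtain ⟨c, hc⟩ := exists_forced_patterns (β := Fin d) S <| by
    simp only [Fintype.card_fin]
    rw [prod_eq_pow_card (b := d ^ k - 1) fun s hs => by rw [hSk s hs],
      prod_eq_pow_card (b := d ^ k) fun s hs => by rw [hSk s hs], hSm]
    refine mul_sub_one_pow_lt_pow (by positivity) ?_
    have hdb : (d : ℝ) ≤ exp b := by
      rw [← exp_log (by positivity : (0 : ℝ) < d)]
      exact exp_le_exp.2 (Nat.le_ceil _)
    calc ((d ^ n : ℕ) : ℝ) ≤ exp b ^ n := by push_cast; gcongr
      _ < exp (n * b + 1) := by rw [← exp_nat_mul]; exact exp_lt_exp.2 (by linarith)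
      _ = exp (m / (d ^ k : ℕ)) := by
        congr 1; simp only [m]; push_cast; field_simp
  obtain ⟨F, hF₁, hF₂, hF₃, hF⟩ := exists_csp_of_forced_patterns Fin.valEmbedding hSk hS hc
  exact ⟨F, hF₁, hF₂, hF₃, (Nat.cast_le.2 (hF.trans hSm.le)).trans hm⟩

theorem one_le_exp_one_mul_div {k ℓ : ℕ} (hℓ : 0 < ℓ) (hℓk : ℓ ≤ k) : 1 ≤ exp 1 * k / ℓ := by
  rw [le_div_iff₀ (by exact_mod_cast hℓ), one_mul]
  calc (ℓ : ℝ) ≤ k := by exact_mod_cast hℓk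
    _ ≤ exp 1 * k := le_mul_of_one_le_left (Nat.cast_nonneg _) (one_le_exp zero_le_one)

theorem one_le_mul_log_mul_pow {k d : ℕ} (hk : 0 < k) (hd : 2 ≤ d) : 1 ≤ k * log d * d ^ k := by
  have hd' : (2 : ℝ) ≤ d := by exact_mod_cast hd
  have hdk : (2 : ℝ) ≤ d ^ k := hd'.trans (le_self_pow₀ (by linarith) hk.ne')
  have hk' : (1 : ℝ) ≤ k := by exact_mod_cast hk
  calc (1 : ℝ) = 1 * 2⁻¹ * 2 := by norm_num
    _ ≤ k * log d * d ^ k := by gcongr; exact (inv_two_lt_log_natCast hd).le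

theorem pow_mul_le_ceil_mul_rpow_inv_pow {j : ℕ} (hj : j ≠ 0) {a B : ℝ} (ha : 0 ≤ a)
    (hB : 0 ≤ B) : a ^ j * B ≤ (⌈a * B ^ (j : ℝ)⁻¹⌉₊ : ℝ) ^ j := by
  calc a ^ j * B = (a * B ^ (j : ℝ)⁻¹) ^ j := by rw [mul_pow, rpow_inv_natCast_pow hB hj]
    _ ≤ (⌈a * B ^ (j : ℝ)⁻¹⌉₊ : ℝ) ^ j := by gcongr; exact Nat.le_ceil _

/-- There is an absolute constant c > 0 such that for all 2 ≤ ℓ ≤ k and d ≥ 2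
there exists an unsatisfiable ℓ-disjoint (k,d)-CSP with at most
c·(e·k²·ℓ⁻¹·ln(d)·d^k)^{1+1/(ℓ-1)} constraints. -/
theorem stmt14 :
    ∃ c : ℝ, 0 < c ∧ ∀ k ℓ d : ℕ, 2 ≤ ℓ → ℓ ≤ k → 2 ≤ d →
      ∃ F : Finset (Finset (ℕ × Fin d)),
        (∀ C ∈ F, C.card = k ∧ (C.image Prod.fst).card = k) ∧
        (∀ C ∈ F, ∀ D ∈ F, C ≠ D →
          ((C.image Prod.fst) ∩ (D.image Prod.fst)).card < ℓ) ∧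
        (∀ α : ℕ → Fin d, ∃ C ∈ F, ∀ p ∈ C, α p.1 = p.2) ∧
        (F.card : ℝ)
          ≤ c * (Real.exp 1 * (k : ℝ) ^ 2 * (ℓ : ℝ)⁻¹ * Real.log d * (d : ℝ) ^ k)
              ^ (1 + ((ℓ : ℝ) - 1)⁻¹) := by
  refine ⟨72, by norm_num, fun k ℓ d hℓ hℓk hd => ?_⟩
  obtain ⟨j, rfl⟩ : ∃ j, ℓ = j + 1 := ⟨ℓ - 1, by omega⟩
  set E : ℝ := exp 1 * k / (j + 1 : ℕ)
  set L : ℝ := k * log d * d ^ k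
  have hE : 1 ≤ E := one_le_exp_one_mul_div j.succ_pos hℓk
  have hL : 1 ≤ L := one_le_mul_log_mul_pow (by omega) hd
  -- `u ^ j` has to beat `6 L C(k, j + 1) ≤ 6 E ^ j (E L)`
  set x : ℝ := 6 * E * (E * L) ^ (j : ℝ)⁻¹
  have hx : 1 ≤ x := by
    have := one_le_rpow (one_le_mul_of_one_le_of_one_le hE hL) (inv_nonneg.2 (Nat.cast_nonneg j))
    nlinarith
  obtain ⟨F, hF₁, hF₂, hF₃, hF⟩ := exists_csp_of_pow_ge (u := ⌈x⌉₊) (by omega) hℓk hd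
    (Nat.ceil_pos.2 (by linarith)) <| by
      have h6 : (6 : ℝ) ≤ 6 ^ j := le_self_pow₀ (by norm_num) (by omega)
      calc 6 * ⌈x⌉₊ * L * k.choose (j + 1) ≤ 6 * ⌈x⌉₊ * L * E ^ (j + 1) := by
            gcongr; exact Nat.choose_le_exp_mul_div_pow k (j + 1)
        _ = ⌈x⌉₊ * (6 * E ^ j * (E * L)) := by ring
        _ ≤ ⌈x⌉₊ * ((6 * E) ^ j * (E * L)) := by rw [mul_pow]; gcongr
        _ ≤ ⌈x⌉₊ * (⌈x⌉₊ : ℝ) ^ j := by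
            gcongr
            exact pow_mul_le_ceil_mul_rpow_inv_pow (by omega) (by positivity) (by positivity)
        _ = (⌈x⌉₊ : ℝ) ^ (j + 1) := by ring
  refine ⟨F, hF₁, hF₂, hF₃, ?_⟩
  have hB : exp 1 * (k : ℝ) ^ 2 * ((j + 1 : ℕ) : ℝ)⁻¹ * log d * d ^ k = E * L := by
    simp only [E, L]; ring
  have hy : (((j + 1 : ℕ) : ℝ) - 1)⁻¹ = (j : ℝ)⁻¹ := by push_cast; ring
  rw [hB, hy]
  calc (#F : ℝ) ≤ 6 * ⌈x⌉₊ * L := hF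
    _ ≤ 6 * (2 * x) * L := by gcongr; exact (Nat.ceil_lt_two_mul (by linarith)).le
    _ = 72 * (E * L) ^ (1 + (j : ℝ)⁻¹) := by
      rw [rpow_add (by positivity), rpow_one]; ring
end

section
/- There exists an unsatisfiable linear k-CNF formula with fewer than ln(2)·k^4·4^k clauses, for all sufficiently large k. -/
/-!
Variables are the points of `Fin k × F` for a finite field `F` of size `q ≥ k 2^k`, and every
non-vertical line `x ↦ a x + b` gives a clause on its `k` points over the first `k` columns.
Two distinct lines share at most one point, so these `q²` clauses form a linear formula.
The signs are chosen by the union bound: a fixed assignment falsifies a clause for exactly one of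
its `2^k` sign patterns, so it satisfies all clauses for at most `(2^k - 1)^(q²)` of the
`2^(k q²)` sign choices, and `2^(k q) (2^k - 1)^(q²) < 2^(k q²)` once `q ≥ k 2^k` because
`(1 + 1/M)^M ≥ 2`. Bertrand's postulate provides a prime `q ≤ 2 k 2^k`, hence at most
`4 k² 4^k < ln 2 · k⁴ 4^k` clauses.
-/

open Finset Function

theorem two_mul_pow_self_le_succ_pow_self {M : ℕ} (hM : 1 ≤ M) : 2 * M ^ M ≤ (M + 1) ^ M := by
  have := pow_add_mul_le_add_pow (a := M) (b := 1) (Nat.zero_le _) (Nat.zero_le _) M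
  rwa [mul_one, Nat.cast_id, mul_pow_sub_one (by omega), ← two_mul] at this

theorem two_pow_mul_pow_lt_succ_pow {M n N : ℕ} (hM : 1 ≤ M) (hN : M * (n + 1) ≤ N) :
    2 ^ n * M ^ N < (M + 1) ^ N := by
  have hblock : 2 ^ (n + 1) * M ^ (M * (n + 1)) ≤ (M + 1) ^ (M * (n + 1)) := by
    simpa only [pow_mul, mul_pow] using
      Nat.pow_le_pow_left (two_mul_pow_self_le_succ_pow_self hM) (n + 1)
  obtain ⟨r, rfl⟩ := Nat.exists_eq_add_of_le hN
  calc 2 ^ n * M ^ (M * (n + 1) + r)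
      < 2 ^ (n + 1) * M ^ (M * (n + 1) + r) := by
        gcongr <;> omega
    _ = 2 ^ (n + 1) * M ^ (M * (n + 1)) * M ^ r := by ring
    _ ≤ (M + 1) ^ (M * (n + 1)) * (M + 1) ^ r := by gcongr; omega
    _ = (M + 1) ^ (M * (n + 1) + r) := (pow_add _ _ _).symm

theorem exists_forall_exists_apply_eq_of_card_mul_lt {ι A β : Type*} [Fintype ι] [Fintype A]
    [Fintype β] (f : A → ι → β)
    (h : Fintype.card A * (Fintype.card β - 1) ^ Fintype.card ι <
      Fintype.card β ^ Fintype.card ι) :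
    ∃ σ : ι → β, ∀ a, ∃ i, σ i = f a i := by
  classical
  let avoiding (a : A) : Finset (ι → β) := Fintype.piFinset fun i => univ.erase (f a i)
  have hcard : #(univ.biUnion avoiding) < #(univ : Finset (ι → β)) := by
    calc #(univ.biUnion avoiding) ≤ ∑ a, #(avoiding a) := card_biUnion_le
      _ = Fintype.card A * (Fintype.card β - 1) ^ Fintype.card ι := by
        simp [avoiding, Fintype.card_piFinset, card_erase_of_mem]
      _ < _ := by simpa using h
  obtain ⟨σ, -, hσ⟩ := exists_mem_notMem_of_card_lt_card hcard
  refine ⟨σ, fun a => ?_⟩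
  by_contra! hne
  exact hσ (mem_biUnion.2 ⟨a, mem_univ _, Fintype.mem_piFinset.2 fun i => by simpa using hne i⟩)

section Clause

variable {k : ℕ}

def clauseOf (v : Fin k → ℕ) (s : Fin k → Bool) : Finset (ℕ × Bool) :=
  univ.image fun i => (v i, s i)

theorem image_fst_clauseOf (v : Fin k → ℕ) (s : Fin k → Bool) :
    (clauseOf v s).image Prod.fst = univ.image v := by
  rw [clauseOf, image_image]
  rfl

theorem card_clauseOf {v : Fin k → ℕ} (hv : Injective v) (s : Fin k → Bool) :
    #(clauseOf v s) = k := by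
  rw [clauseOf, card_image_of_injective _ fun i j hij => hv (congrArg Prod.fst hij), card_fin]

theorem card_image_fst_clauseOf {v : Fin k → ℕ} (hv : Injective v) (s : Fin k → Bool) :
    #((clauseOf v s).image Prod.fst) = k := by
  rw [image_fst_clauseOf, card_image_of_injective _ hv, card_fin]

theorem apply_ne_of_mem_clauseOf_not (α : ℕ → Bool) (v : Fin k → ℕ) :
    ∀ l ∈ clauseOf v (fun i => !α (v i)), α l.1 ≠ l.2 := by
  simp [clauseOf]

end Clause

section AffineLines

variable {F : Type*} [Field F] {k : ℕ}

def lineAt (p : F × F) (x : F) : F := p.1 * x + p.2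

theorem eq_of_lineAt_eq_lineAt {p p' : F × F} {x y : F} (hxy : x ≠ y)
    (hx : lineAt p x = lineAt p' x) (hy : lineAt p y = lineAt p' y) : p = p' := by
  have hslope : p.1 = p'.1 := by
    have : (p.1 - p'.1) * (x - y) = 0 := by
      unfold lineAt at hx hy
      linear_combination hx - hy
    simpa [sub_eq_zero, hxy] using this
  refine Prod.ext hslope ?_
  unfold lineAt at hx
  rw [hslope] at hx
  exact add_left_cancel hx

def lineVar (e : Fin k ↪ F) (enc : Fin k × F ↪ ℕ) (p : F × F) (i : Fin k) : ℕ :=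
  enc (i, lineAt p (e i))

variable (e : Fin k ↪ F) (enc : Fin k × F ↪ ℕ)

theorem lineVar_eq_lineVar_iff {p p' : F × F} {i j : Fin k} :
    lineVar e enc p i = lineVar e enc p' j ↔ i = j ∧ lineAt p (e i) = lineAt p' (e i) := by
  simp only [lineVar, enc.injective.eq_iff, Prod.mk.injEq]
  constructor <;> rintro ⟨rfl, h⟩ <;> exact ⟨rfl, h⟩

theorem lineVar_injective (p : F × F) : Injective (lineVar e enc p) :=
  fun _ _ h => ((lineVar_eq_lineVar_iff e enc).1 h).1

theorem card_inter_image_lineVar_le_one {p p' : F × F} (hp : p ≠ p') :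
    #(univ.image (lineVar e enc p) ∩ univ.image (lineVar e enc p')) ≤ 1 := by
  refine card_le_one.2 fun x hx y hy => ?_
  simp only [mem_inter, mem_image, mem_univ, true_and] at hx hy
  obtain ⟨⟨i, rfl⟩, i', hxi⟩ := hx
  obtain ⟨⟨j, rfl⟩, j', hyj⟩ := hy
  obtain ⟨rfl, hi⟩ := (lineVar_eq_lineVar_iff e enc).1 hxi.symm
  obtain ⟨rfl, hj⟩ := (lineVar_eq_lineVar_iff e enc).1 hyj.symm
  obtain rfl : i = j := by_contra fun hij => hp (eq_of_lineAt_eq_lineAt (e.injective.ne hij) hi hj)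
  rfl

end AffineLines

theorem exists_unsat_linear_cnf_card_le_sq (F : Type*) [Field F] [Fintype F] {k : ℕ} (hk : 1 ≤ k)
    (hF : k * 2 ^ k ≤ Fintype.card F) :
    ∃ Φ : Finset (Finset (ℕ × Bool)),
      (∀ C ∈ Φ, C.card = k ∧ (C.image Prod.fst).card = k) ∧
      (∀ C ∈ Φ, ∀ D ∈ Φ, C ≠ D → ((C.image Prod.fst) ∩ (D.image Prod.fst)).card ≤ 1) ∧
      (∀ α : ℕ → Bool, ∃ C ∈ Φ, ∀ p ∈ C, α p.1 ≠ p.2) ∧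
      Φ.card ≤ Fintype.card F ^ 2 := by
  classical
  set q := Fintype.card F
  obtain ⟨M, hM⟩ : ∃ M, 2 ^ k = M + 1 := ⟨2 ^ k - 1, (Nat.succ_pred_eq_of_pos (by positivity)).symm⟩
  have hM1 : 1 ≤ M := by have := Nat.one_lt_two_pow (n := k) (by omega); omega
  rw [hM] at hF
  obtain ⟨e⟩ : Nonempty (Fin k ↪ F) :=
    Function.Embedding.nonempty_of_card_le (by rw [Fintype.card_fin]; nlinarith)
  let enc : Fin k × F ↪ ℕ := (Fintype.equivFin _).toEmbedding.trans Fin.valEmbedding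
  have hcount : M * (k * q + 1) ≤ q ^ 2 := by nlinarith
  obtain ⟨σ, hσ⟩ := exists_forall_exists_apply_eq_of_card_mul_lt
    (fun (a : Fin k × F → Bool) (p : F × F) i => !a (i, lineAt p (e i))) (by
      simpa [Fintype.card_fun, hM, sq, ← pow_mul] using
        two_pow_mul_pow_lt_succ_pow hM1 hcount)
  refine ⟨univ.image fun p => clauseOf (lineVar e enc p) (σ p), ?_, ?_, ?_, ?_⟩
  · simp only [mem_image, mem_univ, true_and, forall_exists_index, forall_apply_eq_imp_iff]
    exact fun p => ⟨card_clauseOf (lineVar_injective e enc p) _,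
      card_image_fst_clauseOf (lineVar_injective e enc p) _⟩
  · simp only [mem_image, mem_univ, true_and, forall_exists_index, forall_apply_eq_imp_iff]
    intro p p' hne
    rw [image_fst_clauseOf, image_fst_clauseOf]
    exact card_inter_image_lineVar_le_one e enc fun h => hne (by rw [h])
  · intro α
    obtain ⟨p, hp⟩ := hσ (α ∘ enc)
    refine ⟨_, mem_image_of_mem _ (mem_univ p), ?_⟩
    rw [hp]
    exact apply_ne_of_mem_clauseOf_not α (lineVar e enc p)
  · exact card_image_le.trans (by simp [q, sq])

theorem four_mul_sq_lt_log_two_mul_pow_four {k : ℝ} (hk : 3 ≤ k) :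
    4 * k ^ 2 < Real.log 2 * k ^ 4 := by
  have hk2 : 9 ≤ k ^ 2 := by nlinarith
  have h4 : 4 < Real.log 2 * k ^ 2 := by nlinarith [Real.log_two_gt_d9]
  calc 4 * k ^ 2 < Real.log 2 * k ^ 2 * k ^ 2 := by gcongr
    _ = Real.log 2 * k ^ 4 := by ring

/-- For all sufficiently large k there exists an unsatisfiable linear k-CNF
formula with fewer than ln(2)·k⁴·4^k clauses. -/
theorem stmt15 :
    ∃ K : ℕ, ∀ k : ℕ, K ≤ k →
      ∃ F : Finset (Finset (ℕ × Bool)),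
        (∀ C ∈ F, C.card = k ∧ (C.image Prod.fst).card = k) ∧
        (∀ C ∈ F, ∀ D ∈ F, C ≠ D →
          ((C.image Prod.fst) ∩ (D.image Prod.fst)).card ≤ 1) ∧
        (∀ α : ℕ → Bool, ∃ C ∈ F, ∀ p ∈ C, α p.1 ≠ p.2) ∧
        (F.card : ℝ) < Real.log 2 * (k : ℝ) ^ 4 * 4 ^ k := by
  refine ⟨3, fun k hk => ?_⟩
  obtain ⟨q, hq, hlt, hle⟩ := Nat.exists_prime_lt_and_le_two_mul (k * 2 ^ k) (by positivity)
  have := Fact.mk hq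
  obtain ⟨Φ, hunif, hlin, hunsat, hcard⟩ :=
    exists_unsat_linear_cnf_card_le_sq (ZMod q) (k := k) (by omega) (by rw [ZMod.card]; omega)
  refine ⟨Φ, hunif, hlin, hunsat, ?_⟩
  rw [ZMod.card] at hcard
  calc (Φ.card : ℝ) ≤ ((2 * (k * 2 ^ k) : ℕ) : ℝ) ^ 2 := by
        exact_mod_cast hcard.trans (Nat.pow_le_pow_left hle 2)
    _ = 4 * (k : ℝ) ^ 2 * (2 ^ k) ^ 2 := by push_cast; ring
    _ = 4 * (k : ℝ) ^ 2 * 4 ^ k := by rw [← pow_mul, mul_comm k 2, pow_mul]; norm_num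
    _ < Real.log 2 * (k : ℝ) ^ 4 * 4 ^ k :=
        mul_lt_mul_of_pos_right (four_mul_sq_lt_log_two_mul_pow_four (by exact_mod_cast hk))
          (by positivity)
end

section
/- Every unsatisfiable linear 2-CNF formula has at least 6 clauses. -/
/-!
Clauses of a linear 2-CNF are the edges of a simple graph on the variables. Delete clauses having
a variable of degree one (such a clause can always be satisfied last) until every variable has
degree at least two. If moreover every degree is at most two, Hall's theorem gives every clause a
private variable, which is then set to satisfy it. Otherwise some variable `x` has degree at least
three, and with at most five edges the only possibility is `K₄` minus an edge, where `x` and one of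
its neighbours both have degree three; every signing of that graph is satisfiable.
-/

open Finset

namespace CNF

variable {V : Type*} [DecidableEq V]

def vars (C : Finset (V × Bool)) : Finset V := C.image Prod.fst

def Satisfiable (F : Finset (Finset (V × Bool))) : Prop :=
  ∃ α : V → Bool, ∀ C ∈ F, ∃ p ∈ C, α p.1 = p.2

def IsLinear (F : Finset (Finset (V × Bool))) : Prop :=
  ∀ C ∈ F, ∀ D ∈ F, C ≠ D → (vars C ∩ vars D).card ≤ 1

def occurrences (F : Finset (Finset (V × Bool))) (v : V) : Finset (Finset (V × Bool)) :=
  F.filter (v ∈ vars ·)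

variable {F : Finset (Finset (V × Bool))} {C D : Finset (V × Bool)}

theorem mem_vars {v : V} : v ∈ vars C ↔ ∃ b, (v, b) ∈ C := by
  simp [vars]

theorem exists_mem_of_vars_eq_pair {u w : V} (h : vars C = {u, w}) :
    ∃ a b, (u, a) ∈ C ∧ (w, b) ∈ C := by
  obtain ⟨a, ha⟩ := mem_vars.1 (h ▸ mem_insert_self u {w})
  obtain ⟨b, hb⟩ := mem_vars.1 (h ▸ mem_insert_of_mem (mem_singleton_self w))
  exact ⟨a, b, ha, hb⟩

theorem exists_vars_eq_pair {x : V} (hC : (vars C).card = 2) (hx : x ∈ vars C) :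
    ∃ y, vars C = {x, y} := by
  obtain ⟨a, b, -, hab⟩ := card_eq_two.1 hC
  rw [hab, mem_insert, mem_singleton] at hx
  rcases hx with rfl | rfl
  · exact ⟨b, hab⟩
  · exact ⟨a, hab.trans (pair_comm a x)⟩

theorem ne_of_vars_eq_pair {x y : V} (hC : (vars C).card = 2) (h : vars C = {x, y}) : x ≠ y := by
  rintro rfl
  simp [h] at hC

theorem IsLinear.eq_of_mem_vars (hlin : IsLinear F) (hC : C ∈ F) (hD : D ∈ F) {u v : V}
    (huv : u ≠ v) (huC : u ∈ vars C) (hvC : v ∈ vars C) (huD : u ∈ vars D) (hvD : v ∈ vars D) :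
    C = D := by
  by_contra hCD
  have : ({u, v} : Finset V) ⊆ vars C ∩ vars D := by
    simp [insert_subset_iff, huC, hvC, huD, hvD]
  have := (card_pair huv).symm.trans_le ((card_le_card this).trans (hlin C hC D hD hCD))
  omega

theorem Satisfiable.of_erase {v : V} (h : Satisfiable (F.erase C)) (hv : v ∈ vars C)
    (hunique : ∀ D ∈ F, v ∈ vars D → D = C) : Satisfiable F := by
  obtain ⟨α, hα⟩ := h
  obtain ⟨b, hb⟩ := mem_vars.1 hv
  refine ⟨Function.update α v b, fun D hD => ?_⟩
  by_cases hDC : D = C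
  · exact ⟨(v, b), hDC ▸ hb, by simp⟩
  · obtain ⟨p, hp, hαp⟩ := hα D (mem_erase.2 ⟨hDC, hD⟩)
    have hpv : p.1 ≠ v := fun h => hDC (hunique D hD (mem_vars.2 ⟨p.2, h ▸ hp⟩))
    exact ⟨p, hp, by rwa [Function.update_of_ne hpv]⟩

/-- Hall's condition holds by double counting the incidences between a set of clauses and the
variables they contain. -/
theorem satisfiable_of_card_occurrences_le {k : ℕ} (hk : 0 < k)
    (hvars : ∀ C ∈ F, k ≤ (vars C).card) (hocc : ∀ v, (occurrences F v).card ≤ k) :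
    Satisfiable F := by
  let t : F → Finset V := fun C => vars C.1
  have hall : ∀ s : Finset F, s.card ≤ (s.biUnion t).card := by
    intro s
    have : s.card * k ≤ (s.biUnion t).card * k := by
      refine card_mul_le_card_mul (fun C v => v ∈ t C) (fun C hC => ?_) (fun v _ => ?_)
      · have : (s.biUnion t).bipartiteAbove (fun C v => v ∈ t C) C = t C := by
          ext v
          simpa [bipartiteAbove] using fun hv => ⟨C.1, C.2, hC, hv⟩
        rw [this]
        exact hvars C.1 C.2
      · refine (card_le_card_of_injOn Subtype.val (fun C hC => ?_)
          Subtype.val_injective.injOn).trans (hocc v)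
        simp only [coe_bipartiteBelow, Set.mem_ofPred_eq] at hC
        simpa [occurrences, t] using hC.2
    exact Nat.le_of_mul_le_mul_right this hk
  obtain ⟨f, hf, hfmem⟩ := (all_card_le_biUnion_card_iff_exists_injective t).1 hall
  choose σ hσ using fun C => mem_vars.1 (hfmem C)
  refine ⟨Function.extend f σ fun _ => true, fun C hC => ⟨(f ⟨C, hC⟩, σ ⟨C, hC⟩), hσ _, ?_⟩⟩
  exact hf.extend_apply σ _ _

theorem exists_assignment_K₄_minus_edge : ∀ a₁ b₁ a₂ b₂ a₃ b₃ c₁ c₂ d₁ d₃ : Bool,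
    ∃ x y₁ y₂ y₃ : Bool, (x = a₁ ∨ y₁ = b₁) ∧ (x = a₂ ∨ y₂ = b₂) ∧ (x = a₃ ∨ y₃ = b₃) ∧
      (y₁ = c₁ ∨ y₂ = c₂) ∧ (y₁ = d₁ ∨ y₃ = d₃) := by
  decide

theorem satisfiable_of_K₄_minus_edge {x y₁ y₂ y₃ : V} {C₁ C₂ C₃ E : Finset (V × Bool)}
    (hx₁ : x ≠ y₁) (hx₂ : x ≠ y₂) (hx₃ : x ≠ y₃) (h₁₂ : y₁ ≠ y₂) (h₁₃ : y₁ ≠ y₃) (h₂₃ : y₂ ≠ y₃)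
    (hC₁ : vars C₁ = {x, y₁}) (hC₂ : vars C₂ = {x, y₂}) (hC₃ : vars C₃ = {x, y₃})
    (hD : vars D = {y₁, y₂}) (hE : vars E = {y₁, y₃})
    (hF : ∀ C ∈ F, C = C₁ ∨ C = C₂ ∨ C = C₃ ∨ C = D ∨ C = E) :
    Satisfiable F := by
  obtain ⟨a₁, b₁, ha₁, hb₁⟩ := exists_mem_of_vars_eq_pair hC₁
  obtain ⟨a₂, b₂, ha₂, hb₂⟩ := exists_mem_of_vars_eq_pair hC₂
  obtain ⟨a₃, b₃, ha₃, hb₃⟩ := exists_mem_of_vars_eq_pair hC₃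
  obtain ⟨c₁, c₂, hc₁, hc₂⟩ := exists_mem_of_vars_eq_pair hD
  obtain ⟨d₁, d₃, hd₁, hd₃⟩ := exists_mem_of_vars_eq_pair hE
  obtain ⟨X, Y₁, Y₂, Y₃, h₁, h₂, h₃, h₄, h₅⟩ :=
    exists_assignment_K₄_minus_edge a₁ b₁ a₂ b₂ a₃ b₃ c₁ c₂ d₁ d₃
  let α : V → Bool := fun v => if v = x then X else if v = y₁ then Y₁ else if v = y₂ then Y₂ else Y₃
  obtain ⟨hX, hY₁, hY₂, hY₃⟩ : α x = X ∧ α y₁ = Y₁ ∧ α y₂ = Y₂ ∧ α y₃ = Y₃ := by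
    simp [α, hx₁.symm, hx₂.symm, hx₃.symm, h₁₂.symm, h₁₃.symm, h₂₃.symm]
  have hsat : ∀ {C : Finset (V × Bool)} {u w : V} {a b : Bool}, (u, a) ∈ C → (w, b) ∈ C →
      α u = a ∨ α w = b → ∃ p ∈ C, α p.1 = p.2 := by
    rintro C u w a b hu hw (h | h)
    exacts [⟨_, hu, h⟩, ⟨_, hw, h⟩]
  refine ⟨α, fun C hC => ?_⟩
  rcases hF C hC with rfl | rfl | rfl | rfl | rfl
  exacts [hsat ha₁ hb₁ (by rwa [hX, hY₁]), hsat ha₂ hb₂ (by rwa [hX, hY₂]),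
    hsat ha₃ hb₃ (by rwa [hX, hY₃]), hsat hc₁ hc₂ (by rwa [hY₁, hY₂]),
    hsat hd₁ hd₃ (by rwa [hY₁, hY₃])]

theorem exists_pair_and_clause_avoiding (hcard : ∀ C ∈ F, (vars C).card = 2)
    (hlin : IsLinear F) (hshared : ∀ C ∈ F, ∀ v ∈ vars C, ∃ D ∈ F, v ∈ vars D ∧ D ≠ C) {x : V}
    (hC : C ∈ F) (hx : x ∈ vars C) : ∃ y D, vars C = {x, y} ∧ D ∈ F ∧ y ∈ vars D ∧ x ∉ vars D := by
  obtain ⟨y, hy⟩ := exists_vars_eq_pair (hcard C hC) hx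
  have hyC : y ∈ vars C := hy ▸ mem_insert_of_mem (mem_singleton_self y)
  obtain ⟨D, hD, hyD, hDC⟩ := hshared C hC y hyC
  exact ⟨y, D, hy, hD, hyD, fun hxD =>
    hDC (hlin.eq_of_mem_vars hC hD (ne_of_vars_eq_pair (hcard C hC) hy) hx hyC hxD hyD).symm⟩

theorem forall_mem_eq_of_card_le_five {x y₁ y₂ y₃ : V} {C₁ C₂ C₃ E : Finset (V × Bool)}
    (hF : F.card ≤ 5) (hcard : ∀ C ∈ F, (vars C).card = 2)
    (h₁₂ : y₁ ≠ y₂) (h₁₃ : y₁ ≠ y₃) (h₂₃ : y₂ ≠ y₃)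
    (hC₁ : C₁ ∈ F ∧ vars C₁ = {x, y₁}) (hC₂ : C₂ ∈ F ∧ vars C₂ = {x, y₂})
    (hC₃ : C₃ ∈ F ∧ vars C₃ = {x, y₃}) (hD : D ∈ F ∧ vars D = {y₁, y₂})
    (hE : E ∈ F ∧ y₃ ∈ vars E ∧ x ∉ vars E) :
    ∀ C ∈ F, C = C₁ ∨ C = C₂ ∨ C = C₃ ∨ C = D ∨ C = E := by
  have hx₁ := ne_of_vars_eq_pair (hcard _ hC₁.1) hC₁.2
  have hx₂ := ne_of_vars_eq_pair (hcard _ hC₂.1) hC₂.2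
  have hDE : D ≠ E := by
    rintro rfl
    simpa [hD.2, h₁₃.symm, h₂₃.symm] using hE.2.1
  have hne_clause : ∀ {C C' : Finset (V × Bool)} {y y' : V}, vars C = {x, y} →
      vars C' = {x, y'} → x ≠ y → y ≠ y' → C ≠ C' := by
    rintro C C' y y' hv hv' hxy hyy' rfl
    have : y ∈ vars C := by simp [hv]
    simp [hv', hxy.symm, hyy'] at this
  have hdisj : Disjoint ({C₁, C₂, C₃} : Finset _) {D, E} := by
    refine disjoint_left.2 fun C hC hC' => ?_
    have hxC : x ∈ vars C := by
      simp only [mem_insert, mem_singleton] at hC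
      rcases hC with rfl | rfl | rfl <;> simp [hC₁.2, hC₂.2, hC₃.2]
    simp only [mem_insert, mem_singleton] at hC'
    rcases hC' with rfl | rfl
    exacts [by simp [hD.2, hx₁, hx₂] at hxC, hE.2.2 hxC]
  have hcover : {C₁, C₂, C₃} ∪ {D, E} = F := by
    refine eq_of_subset_of_card_le (by simp [insert_subset_iff, hC₁.1, hC₂.1, hC₃.1, hD.1,
      hE.1]) ?_
    rw [card_union_of_disjoint hdisj, card_pair hDE, card_eq_three.2 ⟨C₁, C₂, C₃,
      hne_clause hC₁.2 hC₂.2 hx₁ h₁₂, hne_clause hC₁.2 hC₃.2 hx₁ h₁₃,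
      hne_clause hC₂.2 hC₃.2 hx₂ h₂₃, rfl⟩]
    omega
  intro C hC
  rw [← hcover] at hC
  simp only [mem_union, mem_insert, mem_singleton] at hC
  tauto

theorem satisfiable_of_star_of_joined_leaves {x y₁ y₂ y₃ : V} {C₁ C₂ C₃ E : Finset (V × Bool)}
    (hF : F.card ≤ 5) (hcard : ∀ C ∈ F, (vars C).card = 2)
    (hshared : ∀ C ∈ F, ∀ v ∈ vars C, ∃ D ∈ F, v ∈ vars D ∧ D ≠ C)
    (h₁₂ : y₁ ≠ y₂) (h₁₃ : y₁ ≠ y₃) (h₂₃ : y₂ ≠ y₃)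
    (hC₁ : C₁ ∈ F ∧ vars C₁ = {x, y₁}) (hC₂ : C₂ ∈ F ∧ vars C₂ = {x, y₂})
    (hC₃ : C₃ ∈ F ∧ vars C₃ = {x, y₃}) (hD : D ∈ F ∧ y₁ ∈ vars D ∧ y₂ ∈ vars D)
    (hE : E ∈ F ∧ y₃ ∈ vars E ∧ x ∉ vars E) :
    Satisfiable F := by
  have hx₁ := ne_of_vars_eq_pair (hcard _ hC₁.1) hC₁.2
  have hx₂ := ne_of_vars_eq_pair (hcard _ hC₂.1) hC₂.2
  have hx₃ := ne_of_vars_eq_pair (hcard _ hC₃.1) hC₃.2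
  have hvD : vars D = {y₁, y₂} := (eq_of_subset_of_card_le (by simp [insert_subset_iff, hD.2.1,
    hD.2.2]) (by rw [hcard D hD.1, card_pair h₁₂])).symm
  have hF' := forall_mem_eq_of_card_le_five hF hcard h₁₂ h₁₃ h₂₃ hC₁ hC₂ hC₃ ⟨hD.1, hvD⟩ hE
  obtain ⟨z, hz⟩ := exists_vars_eq_pair (hcard E hE.1) hE.2.1
  have hzx : z ≠ x := fun h => hE.2.2 (by simp [hz, h])
  have hz₃ : y₃ ≠ z := ne_of_vars_eq_pair (hcard E hE.1) hz
  obtain ⟨E', hE', hzE', hE'E⟩ := hshared E hE.1 z (by simp [hz])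
  have hz : z = y₁ ∨ z = y₂ := by
    rcases hF' E' hE' with rfl | rfl | rfl | rfl | rfl
    · simp_all
    · simp_all
    · simp [hC₃.2, hzx, hz₃.symm] at hzE'
    · simpa [hvD] using hzE'
    · exact absurd rfl hE'E
  rcases hz with rfl | rfl
  · exact satisfiable_of_K₄_minus_edge hx₁ hx₂ hx₃ h₁₂ h₁₃ h₂₃ hC₁.2 hC₂.2 hC₃.2 hvD
      (hz.trans (pair_comm _ _)) hF'
  · refine satisfiable_of_K₄_minus_edge hx₂ hx₁ hx₃ h₁₂.symm h₂₃ h₁₃ hC₂.2 hC₁.2 hC₃.2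
      (hvD.trans (pair_comm _ _)) (hz.trans (pair_comm _ _)) fun C hC => ?_
    rcases hF' C hC with h | h | h | h | h <;> simp [h]

theorem satisfiable_of_three_le_card_occurrences (hF : F.card ≤ 5)
    (hcard : ∀ C ∈ F, (vars C).card = 2) (hlin : IsLinear F)
    (hshared : ∀ C ∈ F, ∀ v ∈ vars C, ∃ D ∈ F, v ∈ vars D ∧ D ≠ C) {x : V}
    (hx : 3 ≤ (occurrences F x).card) : Satisfiable F := by
  obtain ⟨t, htx, ht⟩ := exists_subset_card_eq hx
  obtain ⟨C₁, C₂, C₃, hC₁₂, hC₁₃, hC₂₃, rfl⟩ := card_eq_three.1 ht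
  simp only [occurrences, insert_subset_iff, singleton_subset_iff, mem_filter] at htx
  obtain ⟨⟨hC₁, hxC₁⟩, ⟨hC₂, hxC₂⟩, ⟨hC₃, hxC₃⟩⟩ := htx
  obtain ⟨y₁, D₁, hv₁, hD₁, hyD₁, hxD₁⟩ :=
    exists_pair_and_clause_avoiding hcard hlin hshared hC₁ hxC₁
  obtain ⟨y₂, D₂, hv₂, hD₂, hyD₂, hxD₂⟩ :=
    exists_pair_and_clause_avoiding hcard hlin hshared hC₂ hxC₂
  obtain ⟨y₃, D₃, hv₃, hD₃, hyD₃, hxD₃⟩ :=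
    exists_pair_and_clause_avoiding hcard hlin hshared hC₃ hxC₃
  have hne_var : ∀ {C C' : Finset (V × Bool)} {y y' : V}, C ∈ F → C' ∈ F → C ≠ C' →
      vars C = {x, y} → vars C' = {x, y'} → y ≠ y' := by
    rintro C C' y y' hC hC' hCC' hv hv' rfl
    exact hCC' (hlin.eq_of_mem_vars hC hC' (ne_of_vars_eq_pair (hcard C hC) hv)
      (by simp [hv]) (by simp [hv]) (by simp [hv']) (by simp [hv']))
  have h₁₂ := hne_var hC₁ hC₂ hC₁₂ hv₁ hv₂
  have h₁₃ := hne_var hC₁ hC₃ hC₁₃ hv₁ hv₃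
  have h₂₃ := hne_var hC₂ hC₃ hC₂₃ hv₂ hv₃
  have hD : D₁ = D₂ ∨ D₁ = D₃ ∨ D₂ = D₃ := by
    -- at most `5 - 3` clauses of `F` avoid `x`
    by_contra! hne
    have hsub : {D₁, D₂, D₃} ⊆ F.filter (x ∉ vars ·) := by
      simp [insert_subset_iff, hD₁, hD₂, hD₃, hxD₁, hxD₂, hxD₃]
    have h₃ := card_le_card hsub
    rw [card_eq_three.2 ⟨_, _, _, hne.1, hne.2.1, hne.2.2, rfl⟩] at h₃
    have hsplit := card_filter_add_card_filter_not (s := F) (x ∈ vars ·)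
    unfold occurrences at hx
    omega
  rcases hD with rfl | rfl | rfl
  · exact satisfiable_of_star_of_joined_leaves hF hcard hshared h₁₂ h₁₃ h₂₃ ⟨hC₁, hv₁⟩
      ⟨hC₂, hv₂⟩ ⟨hC₃, hv₃⟩ ⟨hD₁, hyD₁, hyD₂⟩ ⟨hD₃, hyD₃, hxD₃⟩
  · exact satisfiable_of_star_of_joined_leaves hF hcard hshared h₁₃ h₁₂ h₂₃.symm ⟨hC₁, hv₁⟩
      ⟨hC₃, hv₃⟩ ⟨hC₂, hv₂⟩ ⟨hD₁, hyD₁, hyD₃⟩ ⟨hD₂, hyD₂, hxD₂⟩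
  · exact satisfiable_of_star_of_joined_leaves hF hcard hshared h₂₃ h₁₂.symm h₁₃.symm
      ⟨hC₂, hv₂⟩ ⟨hC₃, hv₃⟩ ⟨hC₁, hv₁⟩ ⟨hD₂, hyD₂, hyD₃⟩ ⟨hD₁, hyD₁, hxD₁⟩

theorem satisfiable_of_card_le_five (hF : F.card ≤ 5) (hcard : ∀ C ∈ F, (vars C).card = 2)
    (hlin : IsLinear F) : Satisfiable F := by
  induction F using strongInduction with
  | H F ih =>
  by_cases hunique : ∃ C ∈ F, ∃ v ∈ vars C, ∀ D ∈ F, v ∈ vars D → D = C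
  · obtain ⟨C, hC, v, hv, hunique⟩ := hunique
    refine Satisfiable.of_erase (ih _ (erase_ssubset hC) ?_ ?_ ?_) hv hunique
    · exact (card_le_card (erase_subset C F)).trans hF
    · exact fun D hD => hcard D (mem_of_mem_erase hD)
    · exact fun D hD E hE => hlin D (mem_of_mem_erase hD) E (mem_of_mem_erase hE)
  push Not at hunique
  by_cases hhigh : ∃ x, 3 ≤ (occurrences F x).card
  · obtain ⟨x, hx⟩ := hhigh
    exact satisfiable_of_three_le_card_occurrences hF hcard hlin hunique hx
  push Not at hhigh
  exact satisfiable_of_card_occurrences_le two_pos (fun C hC => (hcard C hC).ge)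
    fun v => Nat.le_of_lt_succ (hhigh v)

end CNF

/-- Every unsatisfiable linear 2-CNF formula has at least 6 clauses. -/
theorem stmt17 {V : Type*} [DecidableEq V]
    (F : Finset (Finset (V × Bool)))
    (hcard : ∀ C ∈ F, C.card = 2 ∧ (C.image Prod.fst).card = 2)
    (hlin : ∀ C ∈ F, ∀ D ∈ F, C ≠ D →
      ((C.image Prod.fst) ∩ (D.image Prod.fst)).card ≤ 1)
    (hunsat : ∀ α : V → Bool, ∃ C ∈ F, ∀ p ∈ C, α p.1 ≠ p.2) :
    6 ≤ F.card := by
  by_contra! hF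
  obtain ⟨α, hα⟩ :=
    CNF.satisfiable_of_card_le_five (by omega) (fun C hC => (hcard C hC).2) hlin
  obtain ⟨C, hC, hfalse⟩ := hunsat α
  obtain ⟨p, hp, htrue⟩ := hα C hC
  exact hfalse p hp htrue
end
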